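/- arXiv:2409.17838 — 7 statements merged into one kernel-verified Lean document; each statement's English description precedes it below -/
import Mathlib

section
/- Let 𝔞 be a nonempty finite set and assume the boundedness condition with constants M_θ > 0, ρ > 0, M_φ ≥ 0. Set Q = 2·M_θ·max{(1+ρ·M_φ)², 1+4·ρ·M_φ} and u = 3^{−4/3}·ρ. Then for all α = (a,i), β = (b,j), γ = (c,k) in 𝔄 = 𝔞×ℤ_{≥0} one has |A_{α,β,γ}| ≤ Q·A^PI_{i,j,k}(u), |B_{α,β}^{γ}| ≤ Q·B^PI_{i,j}^{k}(u), |C_{α}^{β,γ}| ≤ Q·C^PI_{i}^{j,k}(u), and |D_{α}| ≤ Q·D^PI_{i}(u). -/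
open scoped BigOperators

noncomputable section

/-- The data of a quantum Airy structure: tensors `A`, `B`, `C`, `D`.
`B α β γ` stands for `B_{α,β}^{γ}` and `C α β γ` for `C_{α}^{β,γ}`. -/
structure AiryTensors (𝕜 : Type*) [RCLike 𝕜] (ι : Type*) where
  A : ι → ι → ι → 𝕜
  B : ι → ι → ι → 𝕜
  C : ι → ι → ι → 𝕜
  D : ι → 𝕜

/-- The sublist of `l` formed by the entries whose index lies in `s`. -/
def selectIdx {ι : Type*} (l : List ι) (s : Finset (Fin l.length)) : List ι :=
  ((List.finRange l.length).filter (fun i => decide (i ∈ s))).map l.get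

/-- `F` is the family of amplitudes associated with the tensors `T`:
symmetric in its indices, vanishing when `k₁ + ⋯ + kₙ > 3g - 3 + n` (where `k = deg`),
with initial data `F_{0;α,β,γ} = A_{α,β,γ}`, `F_{1;α} = D_α`, the conventions
`F_{0;α} = F_{0;α,β} = 0`, and satisfying the topological recursion on `2g - 2 + n`. -/
structure IsAmplitudes {𝕜 : Type*} [RCLike 𝕜] {ι : Type*} (deg : ι → ℕ)
    (T : AiryTensors 𝕜 ι) (F : ℕ → List ι → 𝕜) : Prop where
  symm : ∀ g (l l' : List ι), l.Perm l' → F g l = F g l'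
  vanish : ∀ g (l : List ι), 1 ≤ l.length → 2 < 2 * g + l.length →
    3 * g + l.length < (l.map deg).sum + 3 → F g l = 0
  zero_one : ∀ α, F 0 [α] = 0
  zero_two : ∀ α β, F 0 [α, β] = 0
  base_A : ∀ α β γ, F 0 [α, β, γ] = T.A α β γ
  base_D : ∀ α, F 1 [α] = T.D α
  recur : ∀ g (α : ι) (l : List ι), 4 ≤ 2 * g + (l.length + 1) →
    F g (α :: l) =
      (∑ m : Fin l.length, ∑' μ : ι, T.B α (l.get m) μ * F g (μ :: l.eraseIdx m.1))
      + (1/2) * ∑' μ : ι, ∑' ν : ι, T.C α μ ν *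
          ((if g = 0 then 0 else F (g-1) (μ :: ν :: l))
           + ∑ g₁ ∈ Finset.range (g+1), ∑ s : Finset (Fin l.length),
               F g₁ (μ :: selectIdx l s) * F (g - g₁) (ν :: selectIdx l sᶜ))

/-- The Painlevé I quantum Airy structure with parameter `u`. -/
def PITensors (u : ℝ) : AiryTensors ℝ ℕ where
  A i j k := if i = 0 ∧ j = 0 ∧ k = 0 then 1 / (6 * u) else 0
  B i j k := if i + j ≤ k + 1 then
      (Nat.doubleFactorial (2*k+1) : ℝ) / (2 * (3*u) ^ (k + 2 - (i + j)) * (Nat.doubleFactorial (2*i+1) : ℝ) * (Nat.doubleFactorial (2*j-1) : ℝ))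
    else 0
  C i j k := if i ≤ j + k + 2 then
      ((Nat.doubleFactorial (2*j+1) : ℝ) * (Nat.doubleFactorial (2*k+1) : ℝ)) / (2 * (3*u) ^ (j + k + 3 - i) * (Nat.doubleFactorial (2*i+1) : ℝ))
    else 0
  D i := (if i = 0 then 1 / (16 * (3*u)^2) else 0) + (if i = 1 then 1 / (48 * (3*u)) else 0)

/-- The Airy quantum Airy structure. -/
def AiryT : AiryTensors ℝ ℕ where
  A i j k := if i = 0 ∧ j = 0 ∧ k = 0 then 1 else 0
  B i j k := if i + j = k + 1 then (Nat.doubleFactorial (2*k+1) : ℝ) / ((Nat.doubleFactorial (2*i+1) : ℝ) * (Nat.doubleFactorial (2*j-1) : ℝ)) else 0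
  C i j k := if i = j + k + 2 then ((Nat.doubleFactorial (2*j+1) : ℝ) * (Nat.doubleFactorial (2*k+1) : ℝ)) / (Nat.doubleFactorial (2*i+1) : ℝ) else 0
  D i := if i = 1 then 1 / 24 else 0

/-- The quantum Airy structure of a (local) spectral curve with ramification points `𝔞`,
built from the expansion coefficients `θ` (with `θ a m = 0` for `m < 0`) and `φ`. -/
def genTensors {𝕜 : Type*} [RCLike 𝕜] {𝔞 : Type*} [DecidableEq 𝔞]
    (θ : 𝔞 → ℤ → 𝕜) (φ : 𝔞 × ℕ → 𝔞 × ℕ → 𝕜) : AiryTensors 𝕜 (𝔞 × ℕ) where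
  A α β γ := if α.1 = β.1 ∧ β.1 = γ.1 ∧ α.2 = 0 ∧ β.2 = 0 ∧ γ.2 = 0 then θ α.1 0 else 0
  B α β γ :=
    (if α.1 = β.1 ∧ β.1 = γ.1 then
        θ α.1 ((γ.2 : ℤ) - α.2 - β.2 + 1) * (Nat.doubleFactorial (2*γ.2+1) : 𝕜)
          / ((Nat.doubleFactorial (2*α.2+1) : 𝕜) * (Nat.doubleFactorial (2*β.2-1) : 𝕜))
      else 0)
    + (if α.1 = β.1 ∧ α.2 = 0 ∧ β.2 = 0 then
        θ α.1 0 * φ (α.1, 0) γ * (Nat.doubleFactorial (2*γ.2-1) : 𝕜) else 0)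
  C α β γ :=
    (if α.1 = β.1 ∧ β.1 = γ.1 then
        θ α.1 ((β.2 : ℤ) + γ.2 - α.2 + 2) * ((Nat.doubleFactorial (2*β.2+1) : 𝕜) * (Nat.doubleFactorial (2*γ.2+1) : 𝕜))
          / (Nat.doubleFactorial (2*α.2+1) : 𝕜)
      else 0)
    + (if α.1 = β.1 then
        (∑ m ∈ Finset.range (β.2 + 2 - α.2), θ α.1 (m : ℤ) * φ (α.1, β.2 + 1 - α.2 - m) γ)
          * ((Nat.doubleFactorial (2*β.2+1) : 𝕜) * (Nat.doubleFactorial (2*γ.2-1) : 𝕜)) / (Nat.doubleFactorial (2*α.2+1) : 𝕜)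
      else 0)
    + (if α.1 = γ.1 then
        (∑ m ∈ Finset.range (γ.2 + 2 - α.2), θ α.1 (m : ℤ) * φ (α.1, γ.2 + 1 - α.2 - m) β)
          * ((Nat.doubleFactorial (2*β.2-1) : 𝕜) * (Nat.doubleFactorial (2*γ.2+1) : 𝕜)) / (Nat.doubleFactorial (2*α.2+1) : 𝕜)
      else 0)
    + (if α.2 = 0 then
        θ α.1 0 * φ (α.1, 0) β * φ (α.1, 0) γ * ((Nat.doubleFactorial (2*β.2-1) : 𝕜) * (Nat.doubleFactorial (2*γ.2-1) : 𝕜))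
      else 0)
  D α :=
    (if α.2 = 0 then θ α.1 0 * φ (α.1, 0) (α.1, 0) / 2 + θ α.1 1 / 8 else 0)
    + (if α.2 = 1 then θ α.1 0 / 24 else 0)

/-- The function `P` from the upper bound on Painlevé I amplitudes. -/
def Pfun (u : ℝ) : ℝ := if u < 2/5 then 2 / (5 * u^2) else 5 / (10 * u - 2)

/-!
Bounding `θ` and `φ` termwise, every summand of `A`, `B`, `C`, `D` is at most `Mθ ρ^{-e}` times
the double-factorial weight of the matching Painlevé I entry, `e` being the exponent of `1/(3u)`
in that entry, up to a factor `ρ Mφ` per `φ` and the number (at most `e - 1`) of summands of the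
`θφ`-convolutions. Since `ρ / 3u = 3^{1/3} ≥ 4/3`, the gain `(ρ / 3u)^e ≥ (4/3)^e ≥ e - 1`
absorbs these counting factors. What remains is `(J + ρMφ)(K + ρMφ) ≤ (1 + ρMφ)² J K` for the odd
numbers `J = 2j+1`, `K = 2k+1` split off by `(2j+1)‼ = (2j+1)(2j-1)‼`, and the factor `1 + 4ρMφ`
of the genus-one term `D`.
-/

theorem natCast_le_pow_succ_of_four_thirds_le {τ : ℝ} (hτ : 4 / 3 ≤ τ) (n : ℕ) :
    (n : ℝ) ≤ τ ^ (n + 1) := by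
  refine le_trans ?_ (pow_le_pow_left₀ (by norm_num) hτ _)
  rcases lt_or_ge n 3 with hn | hn
  · interval_cases n <;> norm_num
  induction n, hn using Nat.le_induction with
  | base => norm_num
  | succ m hm ih =>
    have hm' : (3 : ℝ) ≤ m := by exact_mod_cast hm
    rw [pow_succ]
    push_cast
    linarith

theorem natCast_div_pow_succ_le {ρ c : ℝ} (hc : 0 < c) (h : 4 * c ≤ 3 * ρ) (n : ℕ) :
    (n : ℝ) / ρ ^ (n + 1) ≤ 1 / c ^ (n + 1) := by
  have hρ : 0 < ρ := by linarith
  have hτ : 4 / 3 ≤ ρ / c := by rw [le_div_iff₀ hc]; linarith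
  have := natCast_le_pow_succ_of_four_thirds_le hτ n
  rw [div_pow, le_div_iff₀ (by positivity)] at this
  rw [div_le_div_iff₀ (by positivity) (by positivity)]
  linarith

theorem one_div_pow_le_one_div_pow_of_le_left {ρ c : ℝ} (hc : 0 < c) (h : c ≤ ρ) (n : ℕ) :
    1 / ρ ^ n ≤ 1 / c ^ n :=
  one_div_le_one_div_of_le (by positivity) (pow_le_pow_left₀ hc.le h n)

theorem add_mul_add_le_one_add_sq_mul {J K x : ℝ} (hJ : 1 ≤ J) (hK : 1 ≤ K) (hx : 0 ≤ x) :
    (J + x) * (K + x) ≤ (1 + x) ^ 2 * (J * K) := by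
  have hJK : 1 ≤ J * K := one_le_mul_of_one_le_of_one_le hJ hK
  have hJK' : J + K ≤ 2 * (J * K) := by nlinarith
  nlinarith [mul_le_mul_of_nonneg_left hJK' hx, mul_le_mul_of_nonneg_left hJK (sq_nonneg x)]

theorem four_mul_three_rpow_neg_four_thirds_le_one : 4 * (3 : ℝ) ^ (-(4 : ℝ) / 3) ≤ 1 := by
  have hcube : ((3 : ℝ) ^ (-(4 : ℝ) / 3)) ^ 3 = 1 / 81 := by
    rw [← Real.rpow_natCast, ← Real.rpow_mul (by norm_num)]
    norm_num
  have : (3 : ℝ) ^ (-(4 : ℝ) / 3) ≤ 1 / 4 :=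
    le_of_pow_le_pow_left₀ three_ne_zero (by norm_num) (by rw [hcube]; norm_num)
  linarith

open scoped Nat in
theorem Nat.doubleFactorial_two_mul_add_one (k : ℕ) :
    (2 * k + 1)‼ = (2 * k + 1) * (2 * k - 1)‼ := by
  cases k with
  | zero => rfl
  | succ m => rw [show 2 * (m + 1) + 1 = 2 * m + 1 + 2 by ring, Nat.doubleFactorial_add_two]; rfl

theorem norm_ite_le_of_imp {E : Type*} [SeminormedAddCommGroup E] {P : Prop} [Decidable P]
    {x : E} {r : ℝ} (hr : 0 ≤ r) (h : P → ‖x‖ ≤ r) : ‖if P then x else 0‖ ≤ r := by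
  split_ifs with hP
  · exact h hP
  · simpa using hr

section Domination

variable {𝕜 : Type*} [RCLike 𝕜] {𝔞 : Type*} {θ : 𝔞 → ℤ → 𝕜} {φ : 𝔞 × ℕ → 𝔞 × ℕ → 𝕜}
  {Mθ ρ Mφ M u : ℝ}

theorem norm_sum_theta_mul_phi_le (hθ : ∀ (a : 𝔞) (i : ℕ), ‖θ a (i : ℤ)‖ ≤ Mθ / ρ ^ (i + 1))
    (hφ : ∀ (a b : 𝔞) (i j : ℕ), ‖φ (a, i) (b, j)‖ ≤ Mφ / ρ ^ (i + j))
    (a b : 𝔞) (i j k : ℕ) :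
    ‖∑ m ∈ Finset.range (j + 2 - i), θ a (m : ℤ) * φ (a, j + 1 - i - m) (b, k)‖
      ≤ (j + 2 - i : ℕ) * (Mθ * Mφ / ρ ^ (j + k + 2 - i)) := by
  refine (norm_sum_le _ _).trans <| (Finset.sum_le_card_nsmul _ _ _ fun m hm => ?_).trans
    (by rw [Finset.card_range, nsmul_eq_mul])
  rw [Finset.mem_range] at hm
  calc ‖θ a m * φ (a, j + 1 - i - m) (b, k)‖
      ≤ Mθ / ρ ^ (m + 1) * (Mφ / ρ ^ (j + 1 - i - m + k)) := by
        rw [norm_mul]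
        exact mul_le_mul (hθ a m) (hφ a b _ k) (norm_nonneg _) ((norm_nonneg _).trans (hθ a m))
    _ = Mθ * Mφ / ρ ^ (j + k + 2 - i) := by
        rw [div_mul_div_comm, ← pow_add, show m + 1 + (j + 1 - i - m + k) = j + k + 2 - i by omega]

theorem norm_theta_mul_phi_le (hθ : ∀ (a : 𝔞) (i : ℕ), ‖θ a (i : ℤ)‖ ≤ Mθ / ρ ^ (i + 1))
    (hφ : ∀ (a b : 𝔞) (i j : ℕ), ‖φ (a, i) (b, j)‖ ≤ Mφ / ρ ^ (i + j)) (hρ : 0 < ρ)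
    (a c : 𝔞) (k : ℕ) :
    ‖θ a 0 * φ (a, 0) (c, k)‖ ≤ ρ * Mφ * (Mθ / ρ ^ (k + 2)) := by
  have hθ₀ : ‖θ a 0‖ ≤ Mθ / ρ := by simpa using hθ a 0
  have hφk : ‖φ (a, 0) (c, k)‖ ≤ Mφ / ρ ^ k := by simpa using hφ a c 0 k
  calc _ ≤ Mθ / ρ * (Mφ / ρ ^ k) := by
        rw [norm_mul]
        exact mul_le_mul hθ₀ hφk (norm_nonneg _) ((norm_nonneg _).trans hθ₀)
    _ = ρ * Mφ * (Mθ / ρ ^ (k + 2)) := by field_simp; ring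

theorem norm_theta_mul_phi_mul_phi_le (hθ : ∀ (a : 𝔞) (i : ℕ), ‖θ a (i : ℤ)‖ ≤ Mθ / ρ ^ (i + 1))
    (hφ : ∀ (a b : 𝔞) (i j : ℕ), ‖φ (a, i) (b, j)‖ ≤ Mφ / ρ ^ (i + j)) (hρ : 0 < ρ)
    (a b c : 𝔞) (j k : ℕ) :
    ‖θ a 0 * φ (a, 0) (b, j) * φ (a, 0) (c, k)‖ ≤ (ρ * Mφ) ^ 2 * (Mθ / ρ ^ (j + k + 3)) := by
  have hθ₀ : ‖θ a 0‖ ≤ Mθ / ρ := by simpa using hθ a 0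
  have hφj : ‖φ (a, 0) (b, j)‖ ≤ Mφ / ρ ^ j := by simpa using hφ a b 0 j
  have hφk : ‖φ (a, 0) (c, k)‖ ≤ Mφ / ρ ^ k := by simpa using hφ a c 0 k
  calc _ ≤ Mθ / ρ * (Mφ / ρ ^ j) * (Mφ / ρ ^ k) := by
        simp only [norm_mul]
        exact mul_le_mul (mul_le_mul hθ₀ hφj (norm_nonneg _) ((norm_nonneg _).trans hθ₀))
          hφk (norm_nonneg _) (mul_nonneg ((norm_nonneg _).trans hθ₀) ((norm_nonneg _).trans hφj))
    _ = (ρ * Mφ) ^ 2 * (Mθ / ρ ^ (j + k + 3)) := by field_simp; ring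

variable [DecidableEq 𝔞]

theorem norm_genTensors_A_le (hθ : ∀ (a : 𝔞) (i : ℕ), ‖θ a (i : ℤ)‖ ≤ Mθ / ρ ^ (i + 1))
    (hMθ : 0 ≤ Mθ) (hM : 1 ≤ M) (hu : 0 < u) (h3u : 3 * u ≤ ρ) (a b c : 𝔞) (i j k : ℕ) :
    ‖(genTensors θ φ).A (a, i) (b, j) (c, k)‖ ≤ 2 * Mθ * M * (PITensors u).A i j k := by
  simp only [genTensors, PITensors]
  split_ifs with habc hijk
  · calc ‖θ a 0‖ ≤ Mθ / ρ := by simpa using hθ a 0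
      _ ≤ Mθ * M / (3 * u) := by gcongr; exact le_mul_of_one_le_right hMθ hM
      _ = 2 * Mθ * M * (1 / (6 * u)) := by field_simp; ring
  · exact absurd habc.2.2 hijk
  · simp only [norm_zero]; positivity
  · simp

theorem norm_genTensors_B_le_majorant (hθ : ∀ (a : 𝔞) (i : ℕ), ‖θ a (i : ℤ)‖ ≤ Mθ / ρ ^ (i + 1))
    (hφ : ∀ (a b : 𝔞) (i j : ℕ), ‖φ (a, i) (b, j)‖ ≤ Mφ / ρ ^ (i + j))
    (hρ : 0 < ρ) (hMθ : 0 ≤ Mθ) (hMφ : 0 ≤ Mφ) (a b c : 𝔞) {i j k : ℕ} (hijk : i + j ≤ k + 1) :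
    ‖(genTensors θ φ).B (a, i) (b, j) (c, k)‖
      ≤ Mθ * ((2 * k - 1).doubleFactorial
          / ((2 * i + 1).doubleFactorial * (2 * j - 1).doubleFactorial))
        * ((2 * k + 1 + ρ * Mφ) / ρ ^ (k + 2 - (i + j))) := by
  obtain ⟨n, hn⟩ : ∃ n, k + 1 - (i + j) = n := ⟨_, rfl⟩
  simp only [genTensors]
  rw [show k + 2 - (i + j) = n + 1 by omega, show (k : ℤ) - i - j + 1 = n by omega]
  calc _ ≤ _ := norm_add_le _ _
    _ ≤ Mθ / ρ ^ (n + 1) * (2 * k + 1).doubleFactorial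
            / ((2 * i + 1).doubleFactorial * (2 * j - 1).doubleFactorial)
          + ρ * Mφ * (Mθ / ρ ^ (n + 1)) * (2 * k - 1).doubleFactorial
            / ((2 * i + 1).doubleFactorial * (2 * j - 1).doubleFactorial) := by
      gcongr ?_ + ?_ <;> refine norm_ite_le_of_imp (by positivity) fun h => ?_
      · simp only [norm_div, norm_mul, RCLike.norm_natCast]
        gcongr
        exact hθ a n
      · obtain ⟨-, rfl, rfl⟩ := h
        obtain rfl : n = k + 1 := by omega
        rw [norm_mul, RCLike.norm_natCast]
        simp only [Nat.mul_zero, Nat.zero_sub, Nat.doubleFactorial, Nat.cast_one,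
          mul_one, div_one]
        exact mul_le_mul_of_nonneg_right (norm_theta_mul_phi_le hθ hφ hρ a c k) (by positivity)
    _ = _ := by
      rw [Nat.doubleFactorial_two_mul_add_one k]
      push_cast
      field_simp

theorem norm_genTensors_B_le (hθneg : ∀ (a : 𝔞) (m : ℤ), m < 0 → θ a m = 0)
    (hθ : ∀ (a : 𝔞) (i : ℕ), ‖θ a (i : ℤ)‖ ≤ Mθ / ρ ^ (i + 1))
    (hφ : ∀ (a b : 𝔞) (i j : ℕ), ‖φ (a, i) (b, j)‖ ≤ Mφ / ρ ^ (i + j))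
    (hρ : 0 < ρ) (hMθ : 0 ≤ Mθ) (hMφ : 0 ≤ Mφ) (hM : 1 + ρ * Mφ ≤ M) (hu : 0 < u)
    (h3u : 3 * u ≤ ρ) (a b c : 𝔞) (i j k : ℕ) :
    ‖(genTensors θ φ).B (a, i) (b, j) (c, k)‖ ≤ 2 * Mθ * M * (PITensors u).B i j k := by
  by_cases hijk : i + j ≤ k + 1
  swap
  · have hab : ¬(a = b ∧ i = 0 ∧ j = 0) := fun ⟨_, hi, hj⟩ => by omega
    simp only [genTensors, PITensors]
    rw [if_neg hijk, hθneg a _ (by omega), if_neg hab]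
    simp
  refine (norm_genTensors_B_le_majorant hθ hφ hρ hMθ hMφ a b c hijk).trans ?_
  have hK : (1 : ℝ) ≤ 2 * k + 1 := by linarith [(k.cast_nonneg : (0 : ℝ) ≤ k)]
  have hKM : 2 * k + 1 + ρ * Mφ ≤ M * (2 * k + 1) := by
    nlinarith [mul_nonneg (mul_nonneg hρ.le hMφ) (sub_nonneg.mpr hK)]
  have hMK : 0 ≤ M * (2 * k + 1) := le_trans (by positivity) hKM
  simp only [PITensors, if_pos hijk]
  calc _ ≤ Mθ * ((2 * k - 1).doubleFactorial
          / ((2 * i + 1).doubleFactorial * (2 * j - 1).doubleFactorial))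
        * (M * (2 * k + 1) / (3 * u) ^ (k + 2 - (i + j))) := by
        gcongr
    _ = _ := by
        rw [Nat.doubleFactorial_two_mul_add_one k]
        push_cast
        field_simp

theorem norm_genTensors_C_le_majorant (hθ : ∀ (a : 𝔞) (i : ℕ), ‖θ a (i : ℤ)‖ ≤ Mθ / ρ ^ (i + 1))
    (hφ : ∀ (a b : 𝔞) (i j : ℕ), ‖φ (a, i) (b, j)‖ ≤ Mφ / ρ ^ (i + j))
    (hρ : 0 < ρ) (hMθ : 0 ≤ Mθ) (hMφ : 0 ≤ Mφ) (a b c : 𝔞) {i j k : ℕ} (hijk : i ≤ j + k + 2) :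
    ‖(genTensors θ φ).C (a, i) (b, j) (c, k)‖
      ≤ Mθ * ((2 * j - 1).doubleFactorial * (2 * k - 1).doubleFactorial
          / (2 * i + 1).doubleFactorial)
        * (((2 * j + 1) * (2 * k + 1) + (ρ * Mφ) ^ 2) / ρ ^ (j + k + 3 - i)
          + ρ * Mφ * ((j + 2 - i : ℕ) / ρ ^ (j + k + 3 - i) * (2 * j + 1)
            + (k + 2 - i : ℕ) / ρ ^ (j + k + 3 - i) * (2 * k + 1))) := by
  obtain ⟨N, hN⟩ : ∃ N, j + k + 2 - i = N := ⟨_, rfl⟩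
  have hsumj := norm_sum_theta_mul_phi_le hθ hφ a c i j k
  have hsumk := norm_sum_theta_mul_phi_le hθ hφ a b i k j
  rw [hN] at hsumj
  rw [show k + j + 2 - i = N by omega] at hsumk
  have hdfJ : ((2 * j + 1).doubleFactorial : ℝ) = (2 * j + 1) * (2 * j - 1).doubleFactorial := by
    rw [Nat.doubleFactorial_two_mul_add_one]; push_cast; rfl
  have hdfK : ((2 * k + 1).doubleFactorial : ℝ) = (2 * k + 1) * (2 * k - 1).doubleFactorial := by
    rw [Nat.doubleFactorial_two_mul_add_one]; push_cast; rfl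
  simp only [genTensors]
  rw [show j + k + 3 - i = N + 1 by omega, show (j : ℤ) + k - i + 2 = N by omega]
  calc _ ≤ _ := norm_add₄_le
    _ ≤ Mθ / ρ ^ (N + 1) * ((2 * j + 1).doubleFactorial * (2 * k + 1).doubleFactorial)
            / (2 * i + 1).doubleFactorial
          + (j + 2 - i : ℕ) * (Mθ * Mφ / ρ ^ N)
            * ((2 * j + 1).doubleFactorial * (2 * k - 1).doubleFactorial)
            / (2 * i + 1).doubleFactorial
          + (k + 2 - i : ℕ) * (Mθ * Mφ / ρ ^ N)
            * ((2 * j - 1).doubleFactorial * (2 * k + 1).doubleFactorial)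
            / (2 * i + 1).doubleFactorial
          + (ρ * Mφ) ^ 2 * (Mθ / ρ ^ (N + 1))
            * ((2 * j - 1).doubleFactorial * (2 * k - 1).doubleFactorial)
            / (2 * i + 1).doubleFactorial := by
      gcongr ?_ + ?_ + ?_ + ?_ <;> refine norm_ite_le_of_imp (by positivity) fun h => ?_ <;>
        simp only [norm_div, norm_mul, RCLike.norm_natCast]
      · gcongr; exact hθ a N
      · gcongr
      · gcongr
      · subst h
        rw [show N + 1 = j + k + 3 by omega]
        simp only [Nat.doubleFactorial, Nat.cast_one, div_one]
        have := norm_theta_mul_phi_mul_phi_le hθ hφ hρ a b c j k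
        rw [norm_mul, norm_mul] at this
        exact mul_le_mul_of_nonneg_right this (by positivity)
    _ = _ := by rw [hdfJ, hdfK]; field_simp; ring

theorem norm_genTensors_C_le (hθneg : ∀ (a : 𝔞) (m : ℤ), m < 0 → θ a m = 0)
    (hθ : ∀ (a : 𝔞) (i : ℕ), ‖θ a (i : ℤ)‖ ≤ Mθ / ρ ^ (i + 1))
    (hφ : ∀ (a b : 𝔞) (i j : ℕ), ‖φ (a, i) (b, j)‖ ≤ Mφ / ρ ^ (i + j))
    (hρ : 0 < ρ) (hMθ : 0 ≤ Mθ) (hMφ : 0 ≤ Mφ) (hM : (1 + ρ * Mφ) ^ 2 ≤ M) (hu : 0 < u)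
    (h4u : 4 * u ≤ ρ) (a b c : 𝔞) (i j k : ℕ) :
    ‖(genTensors θ φ).C (a, i) (b, j) (c, k)‖ ≤ 2 * Mθ * M * (PITensors u).C i j k := by
  by_cases hijk : i ≤ j + k + 2
  swap
  · simp only [genTensors, PITensors]
    rw [if_neg hijk, hθneg a _ (by omega), show j + 2 - i = 0 by omega,
      show k + 2 - i = 0 by omega, if_neg (show i ≠ 0 by omega)]
    simp
  refine (norm_genTensors_C_le_majorant hθ hφ hρ hMθ hMφ a b c hijk).trans ?_
  obtain ⟨N, hN⟩ : ∃ N, j + k + 3 - i = N + 1 := ⟨j + k + 2 - i, by omega⟩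
  have hs : ∀ n ≤ N, (n : ℝ) / ρ ^ (N + 1) ≤ 1 / (3 * u) ^ (N + 1) := fun n hn =>
    le_trans (by gcongr) (natCast_div_pow_succ_le (by positivity) (by linarith) N)
  have hr : 1 / ρ ^ (N + 1) ≤ 1 / (3 * u) ^ (N + 1) :=
    one_div_pow_le_one_div_pow_of_le_left (by positivity) (by linarith) _
  have hP := hs (j + 2 - i) (by omega)
  have hR := hs (k + 2 - i) (by omega)
  have hJ : (1 : ℝ) ≤ 2 * j + 1 := by linarith [(j.cast_nonneg : (0 : ℝ) ≤ j)]
  have hK : (1 : ℝ) ≤ 2 * k + 1 := by linarith [(k.cast_nonneg : (0 : ℝ) ≤ k)]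
  simp only [PITensors, if_pos hijk, hN]
  set W : ℝ := Mθ * ((2 * j - 1).doubleFactorial * (2 * k - 1).doubleFactorial
    / (2 * i + 1).doubleFactorial)
  set s : ℝ := 1 / (3 * u) ^ (N + 1)
  calc _ ≤ W * (((2 * j + 1) * (2 * k + 1) + (ρ * Mφ) ^ 2) * s
          + ρ * Mφ * (s * (2 * j + 1) + s * (2 * k + 1))) := by
        rw [div_eq_mul_one_div _ (ρ ^ (N + 1))]
        gcongr
    _ = W * s * ((2 * j + 1 + ρ * Mφ) * (2 * k + 1 + ρ * Mφ)) := by ring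
    _ ≤ W * s * (M * ((2 * j + 1) * (2 * k + 1))) := by
        refine mul_le_mul_of_nonneg_left ?_ (by positivity)
        exact (add_mul_add_le_one_add_sq_mul hJ hK (by positivity)).trans (by gcongr)
    _ = _ := by
        rw [Nat.doubleFactorial_two_mul_add_one j, Nat.doubleFactorial_two_mul_add_one k]
        push_cast
        simp only [W, s]
        field_simp

theorem norm_genTensors_D_le (hθ : ∀ (a : 𝔞) (i : ℕ), ‖θ a (i : ℤ)‖ ≤ Mθ / ρ ^ (i + 1))
    (hφ : ∀ (a b : 𝔞) (i j : ℕ), ‖φ (a, i) (b, j)‖ ≤ Mφ / ρ ^ (i + j))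
    (hρ : 0 < ρ) (hMθ : 0 ≤ Mθ) (hMφ : 0 ≤ Mφ) (hM : 1 + 4 * ρ * Mφ ≤ M) (hu : 0 < u)
    (h3u : 3 * u ≤ ρ) (a : 𝔞) (i : ℕ) :
    ‖(genTensors θ φ).D (a, i)‖ ≤ 2 * Mθ * M * (PITensors u).D i := by
  have hθ₀ : ‖θ a 0‖ ≤ Mθ / ρ := by simpa using hθ a 0
  have hθ₁ : ‖θ a 1‖ ≤ Mθ / ρ ^ 2 := by simpa using hθ a 1
  have hφ₀ : ‖φ (a, 0) (a, 0)‖ ≤ Mφ := by simpa using hφ a a 0 0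
  have hM₁ : 1 ≤ M := le_trans (le_add_of_nonneg_right (by positivity)) hM
  simp only [genTensors, PITensors]
  rcases i with _ | _ | i
  · simp only [if_pos, if_neg zero_ne_one, add_zero]
    calc ‖θ a 0 * φ (a, 0) (a, 0) / 2 + θ a 1 / 8‖
        ≤ Mθ / ρ * Mφ / 2 + Mθ / ρ ^ 2 / 8 := by
          refine (norm_add_le _ _).trans ?_
          simp only [norm_div, norm_mul, RCLike.norm_ofNat]
          gcongr
      _ = Mθ * (1 + 4 * ρ * Mφ) / (8 * ρ ^ 2) := by field_simp; ring
      _ ≤ Mθ * M / (8 * (3 * u) ^ 2) := by gcongr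
      _ = 2 * Mθ * M * (1 / (16 * (3 * u) ^ 2)) := by field_simp; ring
  · simp only [if_pos, if_neg one_ne_zero, zero_add]
    calc ‖θ a 0 / 24‖ ≤ Mθ / ρ / 24 := by rw [norm_div, RCLike.norm_ofNat]; gcongr
      _ ≤ Mθ * M / (3 * u) / 24 := by
          gcongr
          exact le_mul_of_one_le_right hMθ hM₁
      _ = 2 * Mθ * M * (1 / (48 * (3 * u))) := by field_simp; ring
  · simp

end Domination

theorem stmt_0_general {𝔞 : Type*} [DecidableEq 𝔞]
    (θ : 𝔞 → ℤ → ℂ) (φ : 𝔞 × ℕ → 𝔞 × ℕ → ℂ)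
    (Mθ ρ Mφ : ℝ) (hMθ : 0 < Mθ) (hρ : 0 < ρ) (hMφ : 0 ≤ Mφ)
    (hθneg : ∀ (a : 𝔞) (m : ℤ), m < 0 → θ a m = 0)
    (hθ : ∀ (a : 𝔞) (i : ℕ), ‖θ a (i : ℤ)‖ ≤ Mθ / ρ ^ (i + 1))
    (hφ : ∀ (a b : 𝔞) (i j : ℕ), ‖φ (a, i) (b, j)‖ ≤ Mφ / ρ ^ (i + j))
    (Q u : ℝ)
    (hQ : Q = 2 * Mθ * max ((1 + ρ * Mφ)^2) (1 + 4 * ρ * Mφ))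
    (hu : u = (3 : ℝ) ^ (-(4 : ℝ)/3) * ρ) :
    ∀ (a b c : 𝔞) (i j k : ℕ),
      ‖(genTensors θ φ).A (a, i) (b, j) (c, k)‖ ≤ Q * (PITensors u).A i j k ∧
      ‖(genTensors θ φ).B (a, i) (b, j) (c, k)‖ ≤ Q * (PITensors u).B i j k ∧
      ‖(genTensors θ φ).C (a, i) (b, j) (c, k)‖ ≤ Q * (PITensors u).C i j k ∧
      ‖(genTensors θ φ).D (a, i)‖ ≤ Q * (PITensors u).D i := by
  have hu₀ : 0 < u := by rw [hu]; positivity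
  have h4u : 4 * u ≤ ρ := by
    rw [hu, ← mul_assoc]
    exact mul_le_of_le_one_left hρ.le four_mul_three_rpow_neg_four_thirds_le_one
  have hx : 0 ≤ ρ * Mφ := by positivity
  have hMsq : (1 + ρ * Mφ) ^ 2 ≤ max ((1 + ρ * Mφ) ^ 2) (1 + 4 * ρ * Mφ) := le_max_left _ _
  have hM1 : 1 + ρ * Mφ ≤ max ((1 + ρ * Mφ) ^ 2) (1 + 4 * ρ * Mφ) :=
    le_trans (by nlinarith) hMsq
  subst hQ
  intro a b c i j k
  exact ⟨norm_genTensors_A_le hθ hMθ.le (by linarith) hu₀ (by linarith) a b c i j k,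
    norm_genTensors_B_le hθneg hθ hφ hρ hMθ.le hMφ hM1 hu₀ (by linarith) a b c i j k,
    norm_genTensors_C_le hθneg hθ hφ hρ hMθ.le hMφ hMsq hu₀ h4u a b c i j k,
    norm_genTensors_D_le hθ hφ hρ hMθ.le hMφ (le_max_right _ _) hu₀ (by linarith) a i⟩

/-- for a bounded (local) spectral curve, the quantum Airy structure tensors
are dominated by `Q` times the Painlevé I tensors at `u = 3^(-4/3) ρ`. -/
theorem stmt_0 {𝔞 : Type*} [Fintype 𝔞] [DecidableEq 𝔞] [Nonempty 𝔞]
    (θ : 𝔞 → ℤ → ℂ) (φ : 𝔞 × ℕ → 𝔞 × ℕ → ℂ)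
    (Mθ ρ Mφ : ℝ) (hMθ : 0 < Mθ) (hρ : 0 < ρ) (hMφ : 0 ≤ Mφ)
    (hθneg : ∀ (a : 𝔞) (m : ℤ), m < 0 → θ a m = 0)
    (hθ : ∀ (a : 𝔞) (i : ℕ), ‖θ a (i : ℤ)‖ ≤ Mθ / ρ ^ (i + 1))
    (hφ : ∀ (a b : 𝔞) (i j : ℕ), ‖φ (a, i) (b, j)‖ ≤ Mφ / ρ ^ (i + j))
    (Q u : ℝ)
    (hQ : Q = 2 * Mθ * max ((1 + ρ * Mφ)^2) (1 + 4 * ρ * Mφ))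
    (hu : u = (3 : ℝ) ^ (-(4 : ℝ)/3) * ρ) :
    ∀ (a b c : 𝔞) (i j k : ℕ),
      ‖(genTensors θ φ).A (a, i) (b, j) (c, k)‖ ≤ Q * (PITensors u).A i j k ∧
      ‖(genTensors θ φ).B (a, i) (b, j) (c, k)‖ ≤ Q * (PITensors u).B i j k ∧
      ‖(genTensors θ φ).C (a, i) (b, j) (c, k)‖ ≤ Q * (PITensors u).C i j k ∧
      ‖(genTensors θ φ).D (a, i)‖ ≤ Q * (PITensors u).D i :=
  stmt_0_general θ φ Mθ ρ Mφ hMθ hρ hMφ hθneg hθ hφ Q u hQ hu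
end
end

section
/- Let 𝔞 be a nonempty finite set and suppose all θ_{(a,m)} and φ_{(a,m),(b,m')} are real with θ_{(a,m)} ≥ 0, φ_{(a,m),(b,m')} ≥ 0, and θ_{(a,0)} > 0 for every a ∈ 𝔞 (positivity and regularity). Set Q₋ = min_{a∈𝔞} θ_{(a,0)}. Then the amplitudes F_{g;α_1,…,α_n} are real and, for all integers g ≥ 0, n ≥ 1 with 2g−2+n > 0 and α_i = (a_i,k_i) ∈ 𝔄, satisfy F_{g;α_1,…,α_n} ≥ δ_{a_1,…,a_n} · Q₋^{2g−2+n} · F^Ai_{g;k_1,…,k_n}, where δ_{a_1,…,a_n} equals 1 if a_1 = ⋯ = a_n and 0 otherwise. -/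
open scoped BigOperators

noncomputable section

/-! The amplitudes are built from the tensors by a recursion in `2g - 2 + n` that only adds and
multiplies, so nonnegative tensors give nonnegative amplitudes, and amplitudes are monotone in the
tensors: if `T' ≤ T ∘ e` entrywise for an injective relabelling `e` of the indices, then
`F'_g(l) ≤ F_g(e l)`, because restricting the sums of the recursion for `F` to the image of `e`
only drops nonnegative terms. Multiplying all tensors by `Q` multiplies the amplitudes by
`Q ^ (2g - 2 + n)`, and `Q₋ • Airy ≤ T ∘ (a, ·)` for every ramification point `a`, the Airy
tensors being the `θ_{(a,0)}`-parts of `A`, `B`, `C`, `D`. Off the diagonal the bound is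
nonnegativity. -/

open Finset Function

namespace AiryTensors

variable {𝕜 : Type*} [RCLike 𝕜] {ι κ : Type*}

instance : Zero (AiryTensors 𝕜 ι) := ⟨⟨0, 0, 0, 0⟩⟩

instance : SMul 𝕜 (AiryTensors 𝕜 ι) :=
  ⟨fun c T => ⟨fun x y z => c * T.A x y z, fun x y z => c * T.B x y z,
    fun x y z => c * T.C x y z, fun x => c * T.D x⟩⟩

def comap (e : κ → ι) (T : AiryTensors 𝕜 ι) : AiryTensors 𝕜 κ :=
  ⟨fun i j k => T.A (e i) (e j) (e k), fun i j k => T.B (e i) (e j) (e k),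
    fun i j k => T.C (e i) (e j) (e k), fun i => T.D (e i)⟩

structure Le (T T' : AiryTensors ℝ ι) : Prop where
  le_A : ∀ x y z, T.A x y z ≤ T'.A x y z
  le_B : ∀ x y z, T.B x y z ≤ T'.B x y z
  le_C : ∀ x y z, T.C x y z ≤ T'.C x y z
  le_D : ∀ x, T.D x ≤ T'.D x

@[simp] theorem smul_A (c : 𝕜) (T : AiryTensors 𝕜 ι) (x y z : ι) :
    (c • T).A x y z = c * T.A x y z :=
  rfl

@[simp] theorem smul_B (c : 𝕜) (T : AiryTensors 𝕜 ι) (x y z : ι) :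
    (c • T).B x y z = c * T.B x y z :=
  rfl

@[simp] theorem smul_C (c : 𝕜) (T : AiryTensors 𝕜 ι) (x y z : ι) :
    (c • T).C x y z = c * T.C x y z :=
  rfl

@[simp] theorem smul_D (c : 𝕜) (T : AiryTensors 𝕜 ι) (x : ι) : (c • T).D x = c * T.D x :=
  rfl

theorem zero_le_smul {Q : ℝ} {T : AiryTensors ℝ ι} (hQ : 0 ≤ Q) (hT : Le 0 T) : Le 0 (Q • T) :=
  ⟨fun x y z => mul_nonneg hQ (hT.le_A x y z), fun x y z => mul_nonneg hQ (hT.le_B x y z),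
    fun x y z => mul_nonneg hQ (hT.le_C x y z), fun x => mul_nonneg hQ (hT.le_D x)⟩

end AiryTensors

section Recursion

variable {𝕜 : Type*} [RCLike 𝕜] {ι κ : Type*}

def bTerm (T : AiryTensors 𝕜 ι) (F : ℕ → List ι → 𝕜) (g : ℕ) (x : ι) (l : List ι) : 𝕜 :=
  ∑ m : Fin l.length, ∑' μ : ι, T.B x (l.get m) μ * F g (μ :: l.eraseIdx m.1)

def splitTerm (F : ℕ → List ι → 𝕜) (g : ℕ) (μ ν : ι) (l : List ι) : 𝕜 :=
  (if g = 0 then 0 else F (g - 1) (μ :: ν :: l))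
    + ∑ g₁ ∈ range (g + 1), ∑ s : Finset (Fin l.length),
        F g₁ (μ :: selectIdx l s) * F (g - g₁) (ν :: selectIdx l sᶜ)

theorem IsAmplitudes.recur_eq {deg : ι → ℕ} {T : AiryTensors 𝕜 ι} {F : ℕ → List ι → 𝕜}
    (hF : IsAmplitudes deg T F) (g : ℕ) (x : ι) (l : List ι) (h : 4 ≤ 2 * g + (l.length + 1)) :
    F g (x :: l) = bTerm T F g x l + 1 / 2 * ∑' μ, ∑' ν, T.C x μ ν * splitTerm F g μ ν l :=
  hF.recur g x l h

theorem length_selectIdx (l : List ι) (s : Finset (Fin l.length)) :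
    (selectIdx l s).length = #s := by
  have h : ((List.finRange l.length).filter (· ∈ s)).length = #(univ.filter (· ∈ s)) := rfl
  simpa [selectIdx] using h

theorem length_selectIdx_le (l : List ι) (s : Finset (Fin l.length)) :
    (selectIdx l s).length ≤ l.length := by
  simpa [length_selectIdx] using card_le_univ s

theorem selectIdx_empty (l : List ι) : selectIdx l ∅ = [] := by
  simp [selectIdx]

theorem filter_finRange_mem_map_finCongr {n n' : ℕ} (h : n = n') (s : Finset (Fin n)) :
    (List.finRange n').filter (· ∈ s.map (finCongr h).toEmbedding)
      = ((List.finRange n).filter (· ∈ s)).map (Fin.cast h) := by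
  subst h
  simp

theorem selectIdx_map (e : κ → ι) (l : List κ) (s : Finset (Fin l.length)) :
    selectIdx (l.map e) (s.map (finCongr (l.length_map e).symm).toEmbedding)
      = (selectIdx l s).map e := by
  simp only [selectIdx]
  rw [filter_finRange_mem_map_finCongr, List.map_map, List.map_map]
  exact List.map_congr_left fun m _ => by simp

theorem bTerm_map (T : AiryTensors 𝕜 ι) (F : ℕ → List ι → 𝕜) (e : κ → ι) (g : ℕ) (x : ι)
    (l : List κ) :
    bTerm T F g x (l.map e)
      = ∑ m : Fin l.length, ∑' μ, T.B x (e (l.get m)) μ * F g (μ :: (l.eraseIdx m).map e) := by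
  rw [bTerm, ← Fin.sum_congr' _ (l.length_map e).symm]
  simp [List.eraseIdx_map]

theorem splitTerm_map (F : ℕ → List ι → 𝕜) (e : κ → ι) (g : ℕ) (i j : κ) (l : List κ) :
    splitTerm F g (e i) (e j) (l.map e) = splitTerm (fun g l => F g (l.map e)) g i j l := by
  let σ := finCongr (l.length_map e).symm
  have hcompl (s : Finset (Fin l.length)) : (s.map σ.toEmbedding)ᶜ = sᶜ.map σ.toEmbedding := by
    ext; simp [Finset.mem_map_equiv]
  simp only [splitTerm, List.map_cons]
  congr 1
  refine sum_congr rfl fun g₁ _ => (Fintype.sum_equiv σ.finsetCongr _ _ fun s => ?_).symm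
  rw [Equiv.finsetCongr_apply, hcompl, selectIdx_map, selectIdx_map]

-- An integer exponent keeps `2g - 2 + n` additive along the splittings of the recursion, whose
-- factors may be the unstable `(g, n) = (0, 1)` amplitudes.
def rescale (Q : 𝕜) (F : ℕ → List ι → 𝕜) (g : ℕ) (l : List ι) : 𝕜 :=
  Q ^ (2 * (g : ℤ) + l.length - 2) * F g l

variable {Q : 𝕜}

theorem splitTerm_rescale (hQ : Q ≠ 0) (F : ℕ → List ι → 𝕜) (g : ℕ) (μ ν : ι) (l : List ι) :
    splitTerm (rescale Q F) g μ ν l = Q ^ (2 * (g : ℤ) + l.length - 2) * splitTerm F g μ ν l := by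
  simp only [splitTerm, rescale, mul_add, mul_sum]
  congr 1
  · split_ifs with hg
    · simp
    · push_cast [List.length_cons, Nat.one_le_iff_ne_zero.2 hg]
      congr 2
      ring
  · refine sum_congr rfl fun g₁ hg₁ => sum_congr rfl fun s _ => ?_
    have hg₁ : g₁ ≤ g := Nat.lt_succ_iff.1 (mem_range.1 hg₁)
    have hcard : #s + #sᶜ = l.length := by rw [card_add_card_compl, Fintype.card_fin]
    rw [mul_mul_mul_comm, ← zpow_add₀ hQ]
    simp only [List.length_cons, length_selectIdx]
    congr 2
    push_cast [hg₁, ← hcard]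
    ring

theorem bTerm_rescale (hQ : Q ≠ 0) (T : AiryTensors 𝕜 ι) (F : ℕ → List ι → 𝕜) (g : ℕ) (x : ι)
    (l : List ι) :
    bTerm (Q • T) (rescale Q F) g x l = Q ^ (2 * (g : ℤ) + l.length - 1) * bTerm T F g x l := by
  simp only [bTerm, rescale, mul_sum, ← tsum_mul_left]
  refine sum_congr rfl fun m _ => tsum_congr fun μ => ?_
  have hlen : ((l.eraseIdx m).length : ℤ) + 1 = l.length := by
    rw [List.length_eraseIdx_of_lt m.isLt]; have := m.isLt; omega
  rw [AiryTensors.smul_B, List.length_cons, show 2 * (g : ℤ) + l.length - 1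
    = 1 + (2 * g + ((l.eraseIdx m).length + 1 : ℕ) - 2) by push_cast; omega, zpow_add₀ hQ, zpow_one]
  ring

theorem IsAmplitudes.smul {deg : ι → ℕ} {T : AiryTensors 𝕜 ι} {F : ℕ → List ι → 𝕜}
    (hF : IsAmplitudes deg T F) (hQ : Q ≠ 0) : IsAmplitudes deg (Q • T) (rescale Q F) where
  symm g l l' h := by rw [rescale, rescale, h.length_eq, hF.symm g l l' h]
  vanish g l h₁ h₂ h₃ := by rw [rescale, hF.vanish g l h₁ h₂ h₃, mul_zero]
  zero_one x := by rw [rescale, hF.zero_one, mul_zero]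
  zero_two x y := by rw [rescale, hF.zero_two, mul_zero]
  base_A x y z := by simp [rescale, hF.base_A]
  base_D x := by simp [rescale, hF.base_D]
  recur g x l h := by
    show rescale Q F g (x :: l) = bTerm (Q • T) (rescale Q F) g x l
      + 1 / 2 * ∑' μ, ∑' ν, (Q • T).C x μ ν * splitTerm (rescale Q F) g μ ν l
    have hC (μ ν : ι) : Q * T.C x μ ν * (Q ^ (2 * (g : ℤ) + l.length - 2) * splitTerm F g μ ν l)
        = Q ^ (2 * (g : ℤ) + l.length - 1) * (T.C x μ ν * splitTerm F g μ ν l) := by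
      rw [show 2 * (g : ℤ) + l.length - 1 = 1 + (2 * g + l.length - 2) by ring, zpow_add₀ hQ,
        zpow_one]
      ring
    simp only [rescale, hF.recur_eq g x l h, bTerm_rescale hQ, splitTerm_rescale hQ,
      AiryTensors.smul_C, hC, tsum_mul_left]
    rw [List.length_cons, Nat.cast_succ, show 2 * (g : ℤ) + (l.length + 1) - 2
      = 2 * g + l.length - 1 by ring]
    ring

end Recursion

theorem amplitude_induction {ι : Type*} {P : ℕ → List ι → Prop} (h01 : ∀ x, P 0 [x])
    (h02 : ∀ x y, P 0 [x, y]) (h03 : ∀ x y z, P 0 [x, y, z]) (h11 : ∀ x, P 1 [x])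
    (hrec : ∀ g x l, 4 ≤ 2 * g + (l.length + 1) →
      (∀ g' l', l' ≠ [] → 2 * g' + l'.length ≤ 2 * g + l.length → P g' l') → P g (x :: l))
    (g : ℕ) (l : List ι) (hl : l ≠ []) : P g l := by
  induction hN : 2 * g + l.length using Nat.strong_induction_on generalizing g l with
  | _ N ih =>
    obtain ⟨x, l, rfl⟩ := List.exists_cons_of_ne_nil hl
    by_cases hstable : 4 ≤ 2 * g + (l.length + 1)
    · refine hrec g x l hstable fun g' l' hl' hle => ih _ ?_ g' l' hl' rfl
      simp only [List.length_cons] at hN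
      omega
    · rcases (by omega : g = 0 ∨ g = 1) with rfl | rfl
      · rcases l with _ | ⟨y, _ | ⟨z, _ | ⟨w, l⟩⟩⟩
        · exact h01 x
        · exact h02 x y
        · exact h03 x y z
        · simp at hstable
      · obtain rfl : l = [] := List.eq_nil_of_length_eq_zero (by omega)
        exact h11 x

theorem tsum_le_tsum_of_le_comp {ι κ : Type*} {f : κ → ℝ} {h : ι → ℝ} {e : κ → ι}
    (he : Injective e) (hf : ∀ k, 0 ≤ f k) (hh : ∀ μ, 0 ≤ h μ) (hfh : ∀ k, f k ≤ h (e k))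
    (hsum : Summable h) : ∑' k, f k ≤ ∑' μ, h μ :=
  Summable.tsum_le_tsum_of_inj e he (fun μ _ => hh μ) hfh
    (.of_nonneg_of_le hf hfh (hsum.comp_injective he)) hsum

section Real

variable {ι : Type*} {deg : ι → ℕ} {T : AiryTensors ℝ ι} {F : ℕ → List ι → ℝ}

theorem IsAmplitudes.eq_zero_of_length_le_two (hF : IsAmplitudes deg T F) {l : List ι}
    (hl : l ≠ []) (h : l.length ≤ 2) : F 0 l = 0 := by
  rcases l with _ | ⟨x, _ | ⟨y, _ | ⟨z, l⟩⟩⟩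
  · exact absurd rfl hl
  · exact hF.zero_one x
  · exact hF.zero_two x y
  · simp at h

theorem IsAmplitudes.eq_zero_of_mem (hF : IsAmplitudes deg T F) {g : ℕ} {l : List ι} {x : ι}
    (hx : x ∈ l) (h : 3 * g + l.length < deg x + 3) : F g l = 0 := by
  have hl : l ≠ [] := List.ne_nil_of_mem hx
  have hlen := List.length_pos_of_ne_nil hl
  by_cases hstable : 2 < 2 * g + l.length
  · have hdeg : deg x ≤ (l.map deg).sum := List.le_sum_of_mem (List.mem_map_of_mem hx)
    exact hF.vanish g l hlen hstable (by omega)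
  · obtain rfl : g = 0 := by omega
    exact hF.eq_zero_of_length_le_two hl (by omega)

theorem IsAmplitudes.splitTerm_eq_zero (hF : IsAmplitudes deg T F) {g : ℕ} {μ ν : ι}
    {l : List ι} (h : 3 * g + l.length ≤ deg μ ∨ 3 * g + l.length ≤ deg ν) :
    splitTerm F g μ ν l = 0 := by
  obtain ⟨z, hz, hzdeg⟩ : ∃ z, (z = μ ∨ z = ν) ∧ 3 * g + l.length ≤ deg z := by
    rcases h with h | h
    exacts [⟨μ, .inl rfl, h⟩, ⟨ν, .inr rfl, h⟩]
  have hgenus : (if g = 0 then 0 else F (g - 1) (μ :: ν :: l)) = 0 := by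
    split_ifs with hg
    · rfl
    · exact hF.eq_zero_of_mem (x := z) (by rcases hz with rfl | rfl <;> simp) (by simp; omega)
  have hsplit (g₁ : ℕ) (hg₁ : g₁ ∈ range (g + 1)) (s : Finset (Fin l.length)) :
      F g₁ (μ :: selectIdx l s) * F (g - g₁) (ν :: selectIdx l sᶜ) = 0 := by
    have := mem_range.1 hg₁
    have := length_selectIdx_le l s
    have := length_selectIdx_le l sᶜ
    rcases hz with rfl | rfl
    · exact mul_eq_zero_of_left (hF.eq_zero_of_mem List.mem_cons_self (by simp; omega)) _
    · exact mul_eq_zero_of_right _ (hF.eq_zero_of_mem List.mem_cons_self (by simp; omega))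
  rw [splitTerm, hgenus, sum_eq_zero fun g₁ hg₁ => sum_eq_zero fun s _ => hsplit g₁ hg₁ s,
    add_zero]

theorem summable_of_eq_zero_of_le_deg (hfin : ∀ M, {μ | deg μ < M}.Finite) {c : ι → ℝ} (M : ℕ)
    (hc : ∀ μ, M ≤ deg μ → c μ = 0) : Summable c :=
  summable_of_ne_finset_zero (s := (hfin M).toFinset) fun μ hμ => hc μ (by simpa using hμ)

theorem splitTerm_mono {F₁ F₂ : ℕ → List ι → ℝ} {g : ℕ} {l : List ι}
    (h₁ : ∀ x, F₁ 0 [x] = 0) (h₂ : ∀ x, F₂ 0 [x] = 0)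
    (hnn : ∀ g' l', l' ≠ [] → 2 * g' + l'.length ≤ 2 * g + l.length → 0 ≤ F₁ g' l')
    (hle : ∀ g' l', l' ≠ [] → 2 * g' + l'.length ≤ 2 * g + l.length → F₁ g' l' ≤ F₂ g' l')
    (μ ν : ι) : splitTerm F₁ g μ ν l ≤ splitTerm F₂ g μ ν l := by
  refine add_le_add ?_ (sum_le_sum fun g₁ hg₁ => sum_le_sum fun s _ => ?_)
  · split_ifs with hg
    · rfl
    · exact hle _ _ (List.cons_ne_nil _ _) (by simp; omega)
  have hg₁ := mem_range.1 hg₁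
  by_cases hleft : g₁ = 0 ∧ s = ∅
  · rw [hleft.1, hleft.2, selectIdx_empty, h₁, h₂, zero_mul, zero_mul]
  by_cases hright : g - g₁ = 0 ∧ sᶜ = ∅
  · rw [hright.1, hright.2, selectIdx_empty, h₁, h₂, mul_zero, mul_zero]
  -- Neither factor is now a `(0, 1)` amplitude, so both have smaller `2g + n`.
  have hcard : #s + #sᶜ = l.length := by rw [card_add_card_compl, Fintype.card_fin]
  have hs : g₁ ≠ 0 ∨ 0 < #s := by rw [card_pos, nonempty_iff_ne_empty]; tauto
  have hsc : g - g₁ ≠ 0 ∨ 0 < #sᶜ := by rw [card_pos, nonempty_iff_ne_empty]; tauto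
  have hle₁ := hle g₁ (μ :: selectIdx l s) (List.cons_ne_nil _ _)
    (by simp only [List.length_cons, length_selectIdx]; omega)
  have hle₂ := hle (g - g₁) (ν :: selectIdx l sᶜ) (List.cons_ne_nil _ _)
    (by simp only [List.length_cons, length_selectIdx]; omega)
  have hnn₁ := hnn g₁ (μ :: selectIdx l s) (List.cons_ne_nil _ _)
    (by simp only [List.length_cons, length_selectIdx]; omega)
  have hnn₂ := hnn (g - g₁) (ν :: selectIdx l sᶜ) (List.cons_ne_nil _ _)
    (by simp only [List.length_cons, length_selectIdx]; omega)
  exact mul_le_mul hle₁ hle₂ hnn₂ (hnn₁.trans hle₁)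

theorem splitTerm_nonneg {g : ℕ} {l : List ι} (h₀ : ∀ x, F 0 [x] = 0)
    (hnn : ∀ g' l', l' ≠ [] → 2 * g' + l'.length ≤ 2 * g + l.length → 0 ≤ F g' l') (μ ν : ι) :
    0 ≤ splitTerm F g μ ν l := by
  simpa [splitTerm] using
    splitTerm_mono (F₁ := 0) (fun _ => rfl) h₀ (fun _ _ _ _ => le_rfl) hnn μ ν

theorem IsAmplitudes.nonneg (hF : IsAmplitudes deg T F) (hT : AiryTensors.Le 0 T) (g : ℕ)
    (l : List ι) (hl : l ≠ []) : 0 ≤ F g l := by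
  refine amplitude_induction (P := fun g l => 0 ≤ F g l) (fun x => (hF.zero_one x).ge)
    (fun x y => (hF.zero_two x y).ge) (fun x y z => (hT.le_A x y z).trans_eq (hF.base_A x y z).symm)
    (fun x => (hT.le_D x).trans_eq (hF.base_D x).symm)
    (fun g x l hstable ih => ?_) g l hl
  have hB : 0 ≤ bTerm T F g x l := sum_nonneg fun m _ => tsum_nonneg fun μ =>
    mul_nonneg (hT.le_B _ _ _) (ih _ _ (List.cons_ne_nil _ _)
      (by have := m.isLt; simp [List.length_eraseIdx_of_lt m.isLt]; omega))
  have hC : 0 ≤ ∑' μ, ∑' ν, T.C x μ ν * splitTerm F g μ ν l := tsum_nonneg fun μ =>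
    tsum_nonneg fun ν => mul_nonneg (hT.le_C _ _ _) (splitTerm_nonneg hF.zero_one ih μ ν)
  rw [hF.recur_eq g x l hstable]
  exact add_nonneg hB (mul_nonneg (by norm_num) hC)

end Real

section Comparison

variable {ι κ : Type*} {deg : ι → ℕ} {deg' : κ → ℕ} {T : AiryTensors ℝ ι} {T' : AiryTensors ℝ κ}
  {F : ℕ → List ι → ℝ} {F' : ℕ → List κ → ℝ} {e : κ → ι}

theorem bTerm_le_bTerm_map (hF' : IsAmplitudes deg' T' F') (hF : IsAmplitudes deg T F)
    (he : Injective e) (hfin : ∀ M, {μ | deg μ < M}.Finite) (hT' : AiryTensors.Le 0 T')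
    (hT : AiryTensors.Le 0 T) (hle : T'.Le (T.comap e)) {g : ℕ} {x : κ} {l : List κ}
    (ih : ∀ g' l', l' ≠ [] → 2 * g' + l'.length ≤ 2 * g + l.length → F' g' l' ≤ F g' (l'.map e)) :
    bTerm T' F' g x l ≤ bTerm T F g (e x) (l.map e) := by
  have hF'nn := hF'.nonneg hT'
  have hFnn := hF.nonneg hT
  rw [bTerm_map]
  refine sum_le_sum fun m _ => ?_
  have hlen : (l.eraseIdx m).length + 1 = l.length := by
    have := m.isLt; rw [List.length_eraseIdx_of_lt m.isLt]; omega
  refine tsum_le_tsum_of_le_comp he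
    (fun k => mul_nonneg (hT'.le_B _ _ _) (hF'nn _ _ (List.cons_ne_nil _ _)))
    (fun μ => mul_nonneg (hT.le_B _ _ _) (hFnn _ _ (List.cons_ne_nil _ _)))
    (fun k => mul_le_mul (hle.le_B _ _ _) (ih _ _ (List.cons_ne_nil _ _) (by simp; omega))
      (hF'nn _ _ (List.cons_ne_nil _ _)) (hT.le_B _ _ _))
    (summable_of_eq_zero_of_le_deg hfin (3 * g + l.length) fun μ hμ => ?_)
  rw [hF.eq_zero_of_mem List.mem_cons_self (by simp; omega), mul_zero]

theorem cTerm_le_cTerm_map (hF' : IsAmplitudes deg' T' F') (hF : IsAmplitudes deg T F)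
    (he : Injective e) (hfin : ∀ M, {μ | deg μ < M}.Finite) (hT' : AiryTensors.Le 0 T')
    (hT : AiryTensors.Le 0 T) (hle : T'.Le (T.comap e)) {g : ℕ} {x : κ} {l : List κ}
    (ih : ∀ g' l', l' ≠ [] → 2 * g' + l'.length ≤ 2 * g + l.length → F' g' l' ≤ F g' (l'.map e)) :
    ∑' i, ∑' j, T'.C x i j * splitTerm F' g i j l
      ≤ ∑' μ, ∑' ν, T.C (e x) μ ν * splitTerm F g μ ν (l.map e) := by
  have hF'nn := hF'.nonneg hT'
  have hFnn := hF.nonneg hT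
  have hsplit'_nn (i j : κ) : 0 ≤ splitTerm F' g i j l :=
    splitTerm_nonneg hF'.zero_one (fun g' l' hl' _ => hF'nn g' l' hl') i j
  have hterm_nn (μ ν : ι) : 0 ≤ T.C (e x) μ ν * splitTerm F g μ ν (l.map e) :=
    mul_nonneg (hT.le_C _ _ _)
      (splitTerm_nonneg hF.zero_one (fun g' l' hl' _ => hFnn g' l' hl') μ ν)
  have hsum (μ : ι) : Summable fun ν => T.C (e x) μ ν * splitTerm F g μ ν (l.map e) :=
    summable_of_eq_zero_of_le_deg hfin (3 * g + l.length) fun ν hν => by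
      rw [hF.splitTerm_eq_zero (.inr (by simpa using hν)), mul_zero]
  have hsum' : Summable fun μ => ∑' ν, T.C (e x) μ ν * splitTerm F g μ ν (l.map e) :=
    summable_of_eq_zero_of_le_deg hfin (3 * g + l.length) fun μ hμ =>
      (tsum_congr fun ν => by rw [hF.splitTerm_eq_zero (.inl (by simpa using hμ)), mul_zero]).trans
        tsum_zero
  refine tsum_le_tsum_of_le_comp he
    (fun i => tsum_nonneg fun j => mul_nonneg (hT'.le_C _ _ _) (hsplit'_nn i j))
    (fun μ => tsum_nonneg (hterm_nn μ)) (fun i => ?_) hsum'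
  refine tsum_le_tsum_of_le_comp he (fun j => mul_nonneg (hT'.le_C _ _ _) (hsplit'_nn i j))
    (hterm_nn (e i)) (fun j => ?_) (hsum (e i))
  rw [splitTerm_map]
  exact mul_le_mul (hle.le_C x i j)
    (splitTerm_mono hF'.zero_one (fun y => hF.zero_one (e y))
      (fun g' l' hl' _ => hF'nn g' l' hl') ih i j)
    (hsplit'_nn i j) (hT.le_C _ _ _)

theorem IsAmplitudes.le_map_of_le_comap (hF' : IsAmplitudes deg' T' F')
    (hF : IsAmplitudes deg T F) (he : Injective e) (hfin : ∀ M, {μ | deg μ < M}.Finite)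
    (hT' : AiryTensors.Le 0 T') (hT : AiryTensors.Le 0 T) (hle : T'.Le (T.comap e)) (g : ℕ)
    (l : List κ) (hl : l ≠ []) : F' g l ≤ F g (l.map e) := by
  refine amplitude_induction (P := fun g l => F' g l ≤ F g (l.map e))
    (fun x => (hF'.zero_one x).trans_le (hF.zero_one (e x)).ge)
    (fun x y => (hF'.zero_two x y).trans_le (hF.zero_two (e x) (e y)).ge)
    (fun x y z => (hF'.base_A x y z).trans_le <| (hle.le_A x y z).trans_eq (hF.base_A _ _ _).symm)
    (fun x => (hF'.base_D x).trans_le <| (hle.le_D x).trans_eq (hF.base_D _).symm)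
    (fun g x l hstable ih => ?_) g l hl
  rw [List.map_cons, hF'.recur_eq g x l hstable,
    hF.recur_eq g (e x) (l.map e) (by simpa using hstable)]
  exact add_le_add (bTerm_le_bTerm_map hF' hF he hfin hT' hT hle ih)
    (mul_le_mul_of_nonneg_left (cTerm_le_cTerm_map hF' hF he hfin hT' hT hle ih) (by norm_num))

end Comparison

section SpectralCurve

variable {𝔞 : Type*} [DecidableEq 𝔞] {θ : 𝔞 → ℤ → ℝ} {φ : 𝔞 × ℕ → 𝔞 × ℕ → ℝ}

theorem genTensors_nonneg (hθ : ∀ a m, 0 ≤ θ a m) (hφ : ∀ α β, 0 ≤ φ α β) :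
    AiryTensors.Le 0 (genTensors θ φ) := by
  have hsum (a : 𝔞) (k j : ℕ) (β : 𝔞 × ℕ) : 0 ≤ ∑ m ∈ range k, θ a m * φ (a, j - m) β :=
    sum_nonneg fun _ _ => mul_nonneg (hθ _ _) (hφ _ _)
  constructor <;> intros <;> simp only [genTensors] <;> split_ifs <;>
    apply_rules [add_nonneg, mul_nonneg, div_nonneg, hsum, hθ, hφ, Nat.cast_nonneg, le_refl] <;>
    positivity

theorem airyT_nonneg : AiryTensors.Le 0 AiryT := by
  constructor <;> intros <;> simp only [AiryT] <;> split_ifs <;> positivity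

theorem smul_airyT_le_comap_genTensors (hθ : ∀ a m, 0 ≤ θ a m) (hφ : ∀ α β, 0 ≤ φ α β) (a : 𝔞)
    {Q : ℝ} (hQ : Q ≤ θ a 0) : (Q • AiryT).Le ((genTensors θ φ).comap (Prod.mk a)) := by
  have hgen := genTensors_nonneg hθ hφ
  constructor
  · intro i j k
    by_cases h : i = 0 ∧ j = 0 ∧ k = 0
    · obtain ⟨rfl, rfl, rfl⟩ := h
      simpa [AiryT, AiryTensors.comap, genTensors] using hQ
    · simp only [AiryTensors.smul_A, AiryT, if_neg h, mul_zero]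
      exact hgen.le_A (a, i) (a, j) (a, k)
  · intro i j k
    by_cases h : i + j = k + 1
    · have hθ0 : (k : ℤ) - i - j + 1 = 0 := by omega
      simp only [AiryTensors.smul_B, AiryT, AiryTensors.comap, genTensors, if_pos h, and_self,
        if_true, hθ0, true_and, if_neg (show ¬(i = 0 ∧ j = 0) by omega), add_zero]
      rw [mul_div_assoc (θ a 0)]
      exact mul_le_mul_of_nonneg_right hQ (by positivity)
    · simp only [AiryTensors.smul_B, AiryT, if_neg h, mul_zero]
      exact hgen.le_B (a, i) (a, j) (a, k)
  · intro i j k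
    by_cases h : i = j + k + 2
    · have hθ0 : (j : ℤ) + k - i + 2 = 0 := by omega
      simp only [AiryTensors.smul_C, AiryT, AiryTensors.comap, genTensors, if_pos h, and_self,
        if_true, hθ0, show j + 2 - i = 0 by omega, show k + 2 - i = 0 by omega,
        if_neg (show i ≠ 0 by omega), range_zero, sum_empty, zero_mul, zero_div, add_zero]
      rw [mul_div_assoc (θ a 0)]
      exact mul_le_mul_of_nonneg_right hQ (by positivity)
    · simp only [AiryTensors.smul_C, AiryT, if_neg h, mul_zero]
      exact hgen.le_C (a, i) (a, j) (a, k)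
  · intro i
    by_cases h : i = 1
    · subst h
      simp only [AiryTensors.smul_D, AiryT, AiryTensors.comap, genTensors, if_true,
        if_neg one_ne_zero, zero_add]
      linarith
    · simp only [AiryTensors.smul_D, AiryT, if_neg h, mul_zero]
      exact hgen.le_D (a, i)

end SpectralCurve

/-- lower bound of the amplitudes of a positive regular spectral curve by the
Airy amplitudes. -/
theorem stmt_2 {𝔞 : Type*} [Fintype 𝔞] [DecidableEq 𝔞] [Nonempty 𝔞]
    (θ : 𝔞 → ℤ → ℝ) (φ : 𝔞 × ℕ → 𝔞 × ℕ → ℝ)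
    (hθneg : ∀ (a : 𝔞) (m : ℤ), m < 0 → θ a m = 0)
    (hθpos : ∀ (a : 𝔞) (m : ℕ), 0 ≤ θ a (m : ℤ))
    (hφpos : ∀ α β, 0 ≤ φ α β)
    (hreg : ∀ a : 𝔞, 0 < θ a 0)
    (Qm : ℝ) (hQm : Qm = Finset.univ.inf' Finset.univ_nonempty (fun a : 𝔞 => θ a 0))
    (F : ℕ → List (𝔞 × ℕ) → ℝ) (hF : IsAmplitudes Prod.snd (genTensors θ φ) F)
    (FAi : ℕ → List ℕ → ℝ) (hFAi : IsAmplitudes id AiryT FAi) :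
    ∀ (g n : ℕ), 1 ≤ n → 2 < 2 * g + n → ∀ α : Fin n → 𝔞 × ℕ,
      (if ∀ i j : Fin n, (α i).1 = (α j).1 then (1 : ℝ) else 0) * Qm ^ (2 * g + n - 2) *
          FAi g (List.ofFn (fun i => (α i).2))
        ≤ F g (List.ofFn α) := by
  intro g n hn hstable α
  have hθ (a : 𝔞) (m : ℤ) : 0 ≤ θ a m := by
    rcases lt_or_ge m 0 with hm | hm
    · rw [hθneg a m hm]
    · lift m to ℕ using hm
      exact hθpos a m
  have hQpos : 0 < Qm := hQm ▸ (lt_inf'_iff _).2 fun a _ => hreg a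
  have hgen := genTensors_nonneg hθ hφpos
  split_ifs with hdiag
  · set a := (α ⟨0, hn⟩).1
    have hα : List.ofFn α = (List.ofFn fun i => (α i).2).map (Prod.mk a) := by
      rw [List.map_ofFn]
      exact congrArg List.ofFn (funext fun i => Prod.ext (hdiag i _) rfl)
    have hfin (M : ℕ) : {μ : 𝔞 × ℕ | μ.2 < M}.Finite :=
      (Set.finite_univ.prod (Set.finite_Iio M)).subset fun μ hμ => ⟨trivial, hμ⟩
    have key := (hFAi.smul hQpos.ne').le_map_of_le_comap hF (Prod.mk_right_injective a) hfin
      (AiryTensors.zero_le_smul hQpos.le airyT_nonneg) hgen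
      (smul_airyT_le_comap_genTensors hθ hφpos a (hQm ▸ inf'_le _ (mem_univ a))) g
      (List.ofFn fun i => (α i).2) (List.ne_nil_of_length_pos (by rw [List.length_ofFn]; omega))
    rw [← hα, rescale, List.length_ofFn] at key
    rwa [one_mul, ← zpow_natCast, Nat.cast_sub (by omega)]
  · rw [zero_mul, zero_mul]
    exact hF.nonneg hgen g _ (List.ne_nil_of_length_pos (by rw [List.length_ofFn]; omega))
end
end

section
/- For every real u > 2/5 there exists a constant s > 0 such that for all integers D ≥ 0 and 0 ≤ k ≤ D: (10u)^k · (4D+1−2k)!!/(D−k)! ≤ s · (100u²/(5u−1))^D · D!. -/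
/-!
Put `n = 2D - k`, `j = D - k` and `p = 1/(5u)`. From `(2n+1)‼ 2ⁿ = (2n+1) C(2n,n) n!` and
`n! = C(n,j) j! D!`, and since `C = 100u²/(5u-1)` satisfies `C(1-p) = 20u` and `Cp(1-p) = 4`,
the left-hand side equals `Cᴰ D! · aₙ · bₙⱼ` with `aₙ = (2n+1) C(2n,n) / 4ⁿ` and
`bₙⱼ = C(n,j) pʲ (1-p)ⁿ⁻ʲ` a binomial probability. Now `aₙ = O(√n)`, while `bₙⱼ = O(1/√n)`
uniformly in `j`: in the bulk this is Stirling's formula together with the Gibbs inequality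
`pʲ (1-p)ᵐ ≤ (j/n)ʲ (m/n)ᵐ` for `m = n - j`, and in the tails `j ≤ np/2` or `n - j ≤ n(1-p)/2` a Chernoff bound
gives exponential decay. Both estimates are proved in squared form, which avoids square roots.
-/

open Real Nat

namespace DoubleFactorialBound

theorem sq_centralBinom_mul_le (n : ℕ) : centralBinom n ^ 2 * (3 * n + 1) ≤ 16 ^ n := by
  induction n with
  | zero => simp
  | succ n ih =>
    refine le_of_mul_le_mul_left ?_ (by positivity : 0 < (n + 1) ^ 2)
    calc (n + 1) ^ 2 * (centralBinom (n + 1) ^ 2 * (3 * (n + 1) + 1))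
        = ((n + 1) * centralBinom (n + 1)) ^ 2 * (3 * n + 4) := by ring
      _ = 4 * (2 * n + 1) ^ 2 * (3 * n + 4) * centralBinom n ^ 2 := by
          rw [succ_mul_centralBinom_succ]; ring
      _ ≤ 16 * (n + 1) ^ 2 * (centralBinom n ^ 2 * (3 * n + 1)) := by
          nlinarith [Nat.zero_le (centralBinom n ^ 2 * n)]
      _ ≤ 16 * (n + 1) ^ 2 * 16 ^ n := by gcongr
      _ = (n + 1) ^ 2 * 16 ^ (n + 1) := by ring

theorem sq_two_mul_add_one_mul_centralBinom_le (n : ℕ) :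
    ((2 * n + 1) * centralBinom n) ^ 2 ≤ 4 * (n + 1) * 16 ^ n :=
  calc ((2 * n + 1) * centralBinom n) ^ 2 = (2 * n + 1) ^ 2 * centralBinom n ^ 2 := by ring
    _ ≤ 4 * (n + 1) * (3 * n + 1) * centralBinom n ^ 2 := by gcongr; nlinarith
    _ = 4 * (n + 1) * (centralBinom n ^ 2 * (3 * n + 1)) := by ring
    _ ≤ 4 * (n + 1) * 16 ^ n := by gcongr; exact sq_centralBinom_mul_le n

theorem doubleFactorial_mul_two_pow (n : ℕ) :
    (2 * n + 1)‼ * 2 ^ n = (2 * n + 1) * centralBinom n * n ! := by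
  refine Nat.eq_of_mul_eq_mul_right (factorial_pos n) ?_
  calc (2 * n + 1)‼ * 2 ^ n * n ! = (2 * n + 1)‼ * (2 * n)‼ := by
        rw [doubleFactorial_two_mul]; ring
    _ = (2 * n + 1) * (2 * n)! := by rw [← factorial_eq_mul_doubleFactorial, factorial_succ]
    _ = (2 * n + 1) * centralBinom n * n ! * n ! := by
        rw [centralBinom, ← choose_mul_factorial_mul_factorial (by omega : n ≤ 2 * n),
          show 2 * n - n = n by omega]; ring

theorem doubleFactorial_div_factorial_eq {n j : ℕ} (hj : j ≤ n) :
    ((2 * n + 1)‼ : ℝ) / j ! =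
      (n - j)! * (((2 * n + 1) * centralBinom n : ℕ) / 4 ^ n) * n.choose j * 2 ^ n := by
  have h1 : ((2 * n + 1)‼ : ℝ) * 2 ^ n = ((2 * n + 1) * centralBinom n : ℕ) * n ! := by
    exact_mod_cast doubleFactorial_mul_two_pow n
  have h2 : (n.choose j : ℝ) * j ! * (n - j)! = n ! := by
    exact_mod_cast choose_mul_factorial_mul_factorial hj
  rw [show (4 : ℝ) ^ n = 2 ^ n * 2 ^ n by rw [← mul_pow]; norm_num]
  field_simp
  rw [← h2] at h1
  linear_combination h1

theorem sq_factorial_le {n : ℕ} (hn : n ≠ 0) :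
    (n ! : ℝ) ^ 2 ≤ exp 1 ^ 2 * n * (n / exp 1) ^ (2 * n) := by
  have h : Stirling.stirlingSeq n ≤ exp 1 / √2 := by
    obtain ⟨k, rfl⟩ := exists_eq_succ_of_ne_zero hn
    exact Stirling.stirlingSeq_one ▸ Stirling.stirlingSeq'_antitone (Nat.zero_le k)
  rw [Stirling.stirlingSeq, div_le_iff₀ (by positivity)] at h
  calc (n ! : ℝ) ^ 2 ≤ (exp 1 / √2 * (√(2 * n) * (n / exp 1) ^ n)) ^ 2 := by gcongr
    _ = exp 1 ^ 2 * n * (n / exp 1) ^ (2 * n) := by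
        rw [mul_pow, mul_pow, div_pow, sq_sqrt (by positivity), sq_sqrt (by positivity), pow_mul']
        ring

theorem two_pi_mul_le_sq_factorial (n : ℕ) :
    2 * π * n * (n / exp 1) ^ (2 * n) ≤ (n ! : ℝ) ^ 2 := by
  calc 2 * π * n * (n / exp 1) ^ (2 * n) = (√(2 * π * n) * (n / exp 1) ^ n) ^ 2 := by
        rw [mul_pow, sq_sqrt (by positivity), pow_mul']
    _ ≤ (n ! : ℝ) ^ 2 := by gcongr; exact Stirling.le_factorial_stirling n

theorem sq_choose_mul_le (j m : ℕ) :
    ((j + m).choose j : ℝ) ^ 2 * (4 * π ^ 2 * j * m) * ((j / exp 1) ^ j * (m / exp 1) ^ m) ^ 2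
      ≤ exp 1 ^ 2 * (j + m) * ((j + m) / exp 1) ^ (2 * (j + m)) := by
  rcases Nat.eq_zero_or_pos j with rfl | hj
  · simp only [CharP.cast_eq_zero, mul_zero, zero_mul]; positivity
  have hfac : ((j + m).choose j : ℝ) * j ! * m ! = (j + m)! := by
    rw [choose_symm_add]; exact_mod_cast add_choose_mul_factorial_mul_factorial j m
  calc ((j + m).choose j : ℝ) ^ 2 * (4 * π ^ 2 * j * m) * ((j / exp 1) ^ j * (m / exp 1) ^ m) ^ 2
      = ((j + m).choose j : ℝ) ^ 2 * ((2 * π * j * (j / exp 1) ^ (2 * j))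
          * (2 * π * m * (m / exp 1) ^ (2 * m))) := by ring
    _ ≤ ((j + m).choose j : ℝ) ^ 2 * ((j ! : ℝ) ^ 2 * (m ! : ℝ) ^ 2) := by
        gcongr <;> exact two_pi_mul_le_sq_factorial _
    _ = ((j + m)! : ℝ) ^ 2 := by rw [← hfac]; ring
    _ ≤ exp 1 ^ 2 * (j + m) * ((j + m) / exp 1) ^ (2 * (j + m)) := by
        exact_mod_cast sq_factorial_le (n := j + m) (by positivity)

theorem pow_mul_pow_le_one {A B : ℝ} (hA : 0 ≤ A) (hB : 0 ≤ B) {j m : ℕ}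
    (h : j * A + m * B ≤ j + m) : A ^ j * B ^ m ≤ 1 :=
  calc A ^ j * B ^ m ≤ exp (A - 1) ^ j * exp (B - 1) ^ m := by
        gcongr <;> linarith [add_one_le_exp (A - 1), add_one_le_exp (B - 1)]
    _ = exp (j * (A - 1) + m * (B - 1)) := by rw [exp_add, ← exp_nat_mul, ← exp_nat_mul]
    _ ≤ 1 := exp_le_one_iff.2 (by linarith)

theorem sq_binomial_mul_le {p : ℝ} (hp0 : 0 ≤ p) (hp1 : p ≤ 1) (j m : ℕ) :
    ((j + m).choose j * p ^ j * (1 - p) ^ m : ℝ) ^ 2 * (4 * π ^ 2 * j * m)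
      ≤ exp 1 ^ 2 * (j + m) := by
  rcases Nat.eq_zero_or_pos j with rfl | hj
  · simp only [CharP.cast_eq_zero, mul_zero, zero_mul]; positivity
  rcases Nat.eq_zero_or_pos m with rfl | hm
  · simp only [CharP.cast_eq_zero, mul_zero]; positivity
  set n : ℝ := j + m
  set A : ℝ := n * p / j
  set B : ℝ := n * (1 - p) / m
  set X : ℝ := (j / exp 1) ^ j * (m / exp 1) ^ m
  have hX : 0 < X := by positivity
  have hAB : A ^ j * B ^ m ≤ 1 := by
    refine pow_mul_pow_le_one (by positivity) (by simp only [B]; bound) (le_of_eq ?_)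
    simp only [A, B, n]; field_simp; ring
  have hA : n * p / exp 1 = A * (j / exp 1) := by simp only [A]; field_simp
  have hB : n * (1 - p) / exp 1 = B * (m / exp 1) := by simp only [B]; field_simp
  have hpow : (n / exp 1) ^ (j + m) * (p ^ j * (1 - p) ^ m) = A ^ j * B ^ m * X :=
    calc (n / exp 1) ^ (j + m) * (p ^ j * (1 - p) ^ m)
        = (n * p / exp 1) ^ j * (n * (1 - p) / exp 1) ^ m := by
          rw [mul_div_right_comm, mul_div_right_comm n, mul_pow, mul_pow, pow_add]; ring
      _ = A ^ j * B ^ m * X := by rw [hA, hB, mul_pow, mul_pow]; ring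
  refine le_of_mul_le_mul_right ?_ (pow_pos hX 2)
  calc ((j + m).choose j * p ^ j * (1 - p) ^ m : ℝ) ^ 2 * (4 * π ^ 2 * j * m) * X ^ 2
      = ((j + m).choose j : ℝ) ^ 2 * (4 * π ^ 2 * j * m) * X ^ 2 * (p ^ j * (1 - p) ^ m) ^ 2 := by
        ring
    _ ≤ exp 1 ^ 2 * n * (n / exp 1) ^ (2 * (j + m)) * (p ^ j * (1 - p) ^ m) ^ 2 := by
        exact mul_le_mul_of_nonneg_right (sq_choose_mul_le j m) (by positivity)
    _ = exp 1 ^ 2 * n * (A ^ j * B ^ m * X) ^ 2 := by rw [← hpow]; ring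
    _ ≤ exp 1 ^ 2 * n * (1 * X) ^ 2 := by gcongr
    _ = exp 1 ^ 2 * n * X ^ 2 := by ring

theorem sq_binomial_mul_succ_le_of_le_two_mul {p : ℝ} (hp0 : 0 < p) (hp1 : p < 1) {j m : ℕ}
    (hjm : 0 < j + m) (hj : (j + m) * p ≤ 2 * j) (hm : (j + m) * (1 - p) ≤ 2 * m) :
    ((j + m).choose j * p ^ j * (1 - p) ^ m : ℝ) ^ 2 * (j + m + 1)
      ≤ 2 * exp 1 ^ 2 / (π ^ 2 * (p * (1 - p))) := by
  set n : ℝ := j + m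
  set b : ℝ := (j + m).choose j * p ^ j * (1 - p) ^ m
  have hn : 1 ≤ n := by simp only [n]; exact_mod_cast hjm
  have hpq : 0 < p * (1 - p) := mul_pos hp0 (by linarith)
  have hjm4 : n ^ 2 * (p * (1 - p)) ≤ 4 * j * m := by
    nlinarith [mul_le_mul hj hm (by nlinarith) (by positivity)]
  have hb := sq_binomial_mul_le hp0.le hp1.le j m
  rw [le_div_iff₀ (by positivity)]
  refine le_of_mul_le_mul_right ?_ (by linarith : 0 < n)
  calc b ^ 2 * (n + 1) * (π ^ 2 * (p * (1 - p))) * n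
      = b ^ 2 * π ^ 2 * (p * (1 - p)) * (n * (n + 1)) := by ring
    _ ≤ b ^ 2 * π ^ 2 * (p * (1 - p)) * (2 * n ^ 2) :=
        mul_le_mul_of_nonneg_left (by nlinarith) (by positivity)
    _ = 2 * π ^ 2 * b ^ 2 * (n ^ 2 * (p * (1 - p))) := by ring
    _ ≤ 2 * π ^ 2 * b ^ 2 * (4 * j * m) := by gcongr
    _ = 2 * (b ^ 2 * (4 * π ^ 2 * j * m)) := by ring
    _ ≤ 2 * (exp 1 ^ 2 * n) := by gcongr
    _ = 2 * exp 1 ^ 2 * n := by ring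

theorem choose_mul_pow_mul_pow_le_add_pow {x y : ℝ} (hx : 0 ≤ x) (hy : 0 ≤ y) {n j : ℕ}
    (hj : j ≤ n) : n.choose j * x ^ j * y ^ (n - j) ≤ (x + y) ^ n := by
  rw [add_pow]
  calc n.choose j * x ^ j * y ^ (n - j) = x ^ j * y ^ (n - j) * n.choose j := by ring
    _ ≤ ∑ i ∈ Finset.range (n + 1), x ^ i * y ^ (n - i) * n.choose i :=
        Finset.single_le_sum (f := fun i => x ^ i * y ^ (n - i) * (n.choose i : ℝ))
          (fun i _ => by positivity) (Finset.mem_range.2 (Nat.lt_succ_of_le hj))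

theorem two_rpow_mul_one_sub_lt_one {p : ℝ} (hp0 : 0 < p) (hp1 : p ≤ 1) :
    (2 : ℝ) ^ (p / 2) * (1 - p / 2) < 1 := by
  have h := rpow_one_add_le_one_add_mul_self (s := 1) (by norm_num) (p := p / 2)
    (by positivity) (by linarith)
  norm_num at h
  nlinarith

theorem binomial_le_of_two_mul_le {p : ℝ} (hp0 : 0 ≤ p) (hp1 : p ≤ 1) {n j : ℕ} (hj : j ≤ n)
    (h : 2 * j ≤ n * p) :
    n.choose j * p ^ j * (1 - p) ^ (n - j) ≤ ((2 : ℝ) ^ (p / 2) * (1 - p / 2)) ^ n := by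
  have h2j : (2 : ℝ) ^ j ≤ ((2 : ℝ) ^ (p / 2)) ^ n := by
    rw [← rpow_natCast, ← rpow_natCast, ← rpow_mul zero_le_two]
    exact rpow_le_rpow_of_exponent_le one_le_two (by linarith)
  calc n.choose j * p ^ j * (1 - p) ^ (n - j)
      = 2 ^ j * (n.choose j * (p / 2) ^ j * (1 - p) ^ (n - j)) := by rw [div_pow]; field_simp
    _ ≤ ((2 : ℝ) ^ (p / 2)) ^ n * (p / 2 + (1 - p)) ^ n := by
        gcongr
        exact choose_mul_pow_mul_pow_le_add_pow (by positivity) (by linarith) hj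
    _ = ((2 : ℝ) ^ (p / 2) * (1 - p / 2)) ^ n := by
        rw [mul_pow, show p / 2 + (1 - p) = 1 - p / 2 by ring]

theorem pow_mul_succ_le {γ : ℝ} (hγ0 : 0 ≤ γ) (hγ1 : γ < 1) (n : ℕ) :
    γ ^ n * (n + 1) ≤ 1 / (1 - γ) :=
  calc γ ^ n * (n + 1) = ∑ _i ∈ Finset.range (n + 1), γ ^ n := by simp [mul_comm]
    _ ≤ ∑ i ∈ Finset.Ico 0 (n + 1), γ ^ i := by
        rw [← Finset.range_eq_Ico]
        exact Finset.sum_le_sum fun i hi =>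
          pow_le_pow_of_le_one hγ0 hγ1.le (Nat.lt_succ_iff.1 (Finset.mem_range.1 hi))
    _ ≤ γ ^ 0 / (1 - γ) := geom_sum_Ico_le_of_lt_one hγ0 hγ1
    _ = 1 / (1 - γ) := by rw [pow_zero]

theorem exists_sq_binomial_mul_succ_le_of_two_mul_le {p : ℝ} (hp0 : 0 < p) (hp1 : p ≤ 1) :
    ∃ c : ℝ, ∀ n j : ℕ, j ≤ n → 2 * j ≤ n * p →
      (n.choose j * p ^ j * (1 - p) ^ (n - j)) ^ 2 * (n + 1) ≤ c := by
  set β : ℝ := (2 : ℝ) ^ (p / 2) * (1 - p / 2)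
  have hβ0 : 0 ≤ β := mul_nonneg (by positivity) (by linarith)
  have hβ1 : β < 1 := two_rpow_mul_one_sub_lt_one hp0 hp1
  refine ⟨1 / (1 - β ^ 2), fun n j hj h => ?_⟩
  calc (n.choose j * p ^ j * (1 - p) ^ (n - j)) ^ 2 * (n + 1) ≤ (β ^ n) ^ 2 * (n + 1) := by
        have : 0 ≤ 1 - p := by linarith
        gcongr
        exact binomial_le_of_two_mul_le hp0.le hp1 hj h
    _ = (β ^ 2) ^ n * (n + 1) := by rw [← pow_mul, ← pow_mul, mul_comm n]
    _ ≤ 1 / (1 - β ^ 2) := pow_mul_succ_le (by positivity) (by nlinarith) n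

theorem exists_sq_binomial_mul_succ_le {p : ℝ} (hp0 : 0 < p) (hp1 : p < 1) :
    ∃ c : ℝ, 0 < c ∧ ∀ n j : ℕ, j ≤ n →
      (n.choose j * p ^ j * (1 - p) ^ (n - j)) ^ 2 * (n + 1) ≤ c := by
  obtain ⟨c₁, hc₁⟩ := exists_sq_binomial_mul_succ_le_of_two_mul_le hp0 hp1.le
  obtain ⟨c₂, hc₂⟩ := exists_sq_binomial_mul_succ_le_of_two_mul_le (p := 1 - p)
    (by linarith) (by linarith)
  have hc₁_pos : 0 < c₁ := zero_lt_one.trans_le (by simpa using hc₁ 0 0 le_rfl (by simp))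
  refine ⟨max c₁ (max c₂ (2 * exp 1 ^ 2 / (π ^ 2 * (p * (1 - p))))),
    lt_max_of_lt_left hc₁_pos, fun n j hj => ?_⟩
  obtain ⟨m, rfl⟩ := Nat.exists_eq_add_of_le hj
  rw [add_tsub_cancel_left]
  by_cases h₁ : 2 * (j : ℝ) ≤ (j + m : ℕ) * p
  · exact le_max_of_le_left (by simpa using hc₁ _ _ hj h₁)
  by_cases h₂ : 2 * (m : ℝ) ≤ (j + m : ℕ) * (1 - p)
  · have h := hc₂ _ _ (Nat.le_add_left m j) h₂
    rw [← choose_symm_add, add_tsub_cancel_right, sub_sub_cancel] at h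
    exact le_max_of_le_right (le_max_of_le_left (by simpa [mul_right_comm] using h))
  rw [not_le] at h₁ h₂
  push_cast at h₁ h₂ ⊢
  have hj0 : (0 : ℝ) < j := by nlinarith [show (0 : ℝ) ≤ (j + m) * p by positivity]
  refine le_max_of_le_right (le_max_of_le_right ?_)
  exact sq_binomial_mul_succ_le_of_le_two_mul hp0 hp1
    (Nat.add_pos_left (Nat.cast_pos.1 hj0) m) h₁.le h₂.le

theorem centralBinom_mul_binomial_le {p c : ℝ} (hp0 : 0 ≤ p) (hp1 : p ≤ 1)
    (hc : ∀ n j : ℕ, j ≤ n → (n.choose j * p ^ j * (1 - p) ^ (n - j)) ^ 2 * (n + 1) ≤ c)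
    {n j : ℕ} (hj : j ≤ n) :
    ((2 * n + 1) * centralBinom n : ℕ) / (4 : ℝ) ^ n * (n.choose j * p ^ j * (1 - p) ^ (n - j))
      ≤ 2 * √c := by
  set a : ℝ := ((2 * n + 1) * centralBinom n : ℕ) / (4 : ℝ) ^ n
  set b : ℝ := n.choose j * p ^ j * (1 - p) ^ (n - j)
  have ha : a ^ 2 ≤ 4 * (n + 1) := by
    have h : (((2 * n + 1) * centralBinom n : ℕ) : ℝ) ^ 2 ≤ 4 * (n + 1) * 16 ^ n := by
      exact_mod_cast sq_two_mul_add_one_mul_centralBinom_le n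
    rw [div_pow, div_le_iff₀ (by positivity), ← pow_mul, mul_comm n, pow_mul]
    norm_num only at h ⊢
    exact h
  have hb : 0 ≤ b := mul_nonneg (by positivity) (pow_nonneg (by linarith) _)
  have hc0 : 0 ≤ c := le_trans (by positivity) (hc 0 0 le_rfl)
  have hab : (a * b) ^ 2 ≤ 4 * c :=
    calc (a * b) ^ 2 = a ^ 2 * b ^ 2 := mul_pow a b 2
      _ ≤ 4 * (n + 1) * b ^ 2 := by gcongr
      _ = 4 * (b ^ 2 * (n + 1)) := by ring
      _ ≤ 4 * c := by gcongr; exact hc n j hj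
  calc a * b ≤ √(4 * c) := (le_sqrt (by positivity) (by positivity)).2 hab
    _ = 2 * √c := by rw [sqrt_mul zero_le_four, show (4 : ℝ) = 2 ^ 2 by norm_num, sqrt_sq zero_le_two]

theorem ten_mul_pow_mul_two_pow_eq {u : ℝ} (hu0 : u ≠ 0) (hu1 : 5 * u - 1 ≠ 0) (k j : ℕ) :
    (10 * u) ^ k * 2 ^ (k + 2 * j) = (100 * u ^ 2 / (5 * u - 1)) ^ (k + j) *
      ((1 / (5 * u)) ^ j * (1 - 1 / (5 * u)) ^ (k + j)) := by
  have hq : 100 * u ^ 2 / (5 * u - 1) * (1 - 1 / (5 * u)) = 20 * u := by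
    rw [one_sub_div (by simpa using hu0), mul_div_assoc', div_mul_cancel₀ _ hu1]
    field_simp; ring
  have hpq : 100 * u ^ 2 / (5 * u - 1) * (1 / (5 * u) * (1 - 1 / (5 * u))) = 4 := by
    rw [mul_left_comm, hq]; field_simp; norm_num
  set C := 100 * u ^ 2 / (5 * u - 1)
  set p := 1 / (5 * u)
  calc (10 * u) ^ k * 2 ^ (k + 2 * j) = (20 * u) ^ k * 4 ^ j := by
        rw [pow_add, pow_mul, ← mul_assoc, ← mul_pow, show 10 * u * 2 = 20 * u by ring]
        norm_num
    _ = (C * (1 - p)) ^ k * (C * (p * (1 - p))) ^ j := by rw [hq, hpq]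
    _ = C ^ (k + j) * (p ^ j * (1 - p) ^ (k + j)) := by
        rw [mul_pow, mul_pow, mul_pow, pow_add, pow_add]; ring

end DoubleFactorialBound

open DoubleFactorialBound in
/-- for `u > 2/5`, `(10u)^k (4D+1-2k)!!/(D-k)!` is uniformly dominated by
`s (100u²/(5u-1))^D D!`. -/
theorem stmt_13 (u : ℝ) (hu : 2/5 < u) :
    ∃ s : ℝ, 0 < s ∧
      ∀ D k : ℕ, k ≤ D →
        (10 * u) ^ k * (Nat.doubleFactorial (4 * D + 1 - 2 * k) : ℝ) /
            (Nat.factorial (D - k) : ℝ)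
          ≤ s * (100 * u ^ 2 / (5 * u - 1)) ^ D * (Nat.factorial D : ℝ) := by
  have hu0 : 0 < u := by linarith
  have hp0 : 0 < 1 / (5 * u) := by positivity
  have hp1 : 1 / (5 * u) < 1 := by rw [div_lt_one (by positivity)]; linarith
  obtain ⟨c, hc, hbinom⟩ := exists_sq_binomial_mul_succ_le hp0 hp1
  refine ⟨2 * √c, by positivity, fun D k hk => ?_⟩
  obtain ⟨j, rfl⟩ := Nat.exists_eq_add_of_le hk
  have hidx : 4 * (k + j) + 1 - 2 * k = 2 * (k + 2 * j) + 1 := by omega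
  rw [hidx, add_tsub_cancel_left, mul_div_assoc, doubleFactorial_div_factorial_eq (by omega)]
  have hpow := ten_mul_pow_mul_two_pow_eq hu0.ne' (by linarith) k j
  have hab := centralBinom_mul_binomial_le hp0.le hp1.le hbinom (by omega : j ≤ k + 2 * j)
  set n := k + 2 * j
  have hnj : n - j = k + j := by omega
  rw [hnj] at hab ⊢
  set C := 100 * u ^ 2 / (5 * u - 1)
  set p := 1 / (5 * u)
  set a : ℝ := ((2 * n + 1) * centralBinom n : ℕ) / (4 : ℝ) ^ n
  have hC : 0 < C := div_pos (by positivity) (by linarith)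
  calc (10 * u) ^ k * ((k + j)! * a * n.choose j * 2 ^ n)
      = C ^ (k + j) * (k + j)! * (a * (n.choose j * p ^ j * (1 - p) ^ (k + j))) := by
        linear_combination ((k + j)! * a * n.choose j) * hpow
    _ ≤ C ^ (k + j) * (k + j)! * (2 * √c) := mul_le_mul_of_nonneg_left hab (by positivity)
    _ = 2 * √c * C ^ (k + j) * (k + j)! := by ring
end

section
/- For every integer n ≥ 1 there exists a constant M > 0 such that for every integer g ≥ 0 with 2g−2+n ≥ 1: (3g−3+n)!/g! ≤ M · (3√3/2)^{2g−2+n} · Γ(2g−2+n), where Γ denotes the Gamma function. -/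
/-! With `k = 2g + n - 3` we have `Γ(2g - 2 + n) = k!` and `(3g + n - 3)! / g! = C(g + k, k) k!`.
Since `C(g + k, k) 2^k` is one term of the binomial expansion of `(2 + 1)^(g + k)`, the left side
is at most `3^(g + k) / 2^k · k!`, and for `M = 2 / √3^n` this is exactly the right side. -/

open Nat

theorem choose_mul_pow_le_add_pow {R : Type*} [CommSemiring R] [PartialOrder R] [IsOrderedRing R]
    {x y : R} (hx : 0 ≤ x) (hy : 0 ≤ y) {m k : ℕ} (hk : k ≤ m) :
    x ^ k * y ^ (m - k) * m.choose k ≤ (x + y) ^ m := by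
  rw [add_pow]
  exact Finset.single_le_sum (f := fun i => x ^ i * y ^ (m - i) * m.choose i)
    (fun i _ => by positivity) (Finset.mem_range_succ_iff.mpr hk)

theorem Nat.add_factorial_mul_two_pow_le (g k : ℕ) :
    (g + k)! * 2 ^ k ≤ 3 ^ (g + k) * k ! * g ! := by
  have hchoose : 2 ^ k * (g + k).choose k ≤ 3 ^ (g + k) := by
    simpa using choose_mul_pow_le_add_pow (x := 2) (y := 1) (Nat.zero_le _) (Nat.zero_le _)
      (Nat.le_add_left k g)
  calc (g + k)! * 2 ^ k = 2 ^ k * (g + k).choose k * (k ! * g !) := by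
        rw [← Nat.add_choose_mul_factorial_mul_factorial]; ring
    _ ≤ 3 ^ (g + k) * (k ! * g !) := by gcongr
    _ = 3 ^ (g + k) * k ! * g ! := by ring

theorem stmt_14_general (n : ℕ) :
    ∃ M : ℝ, 0 < M ∧
      ∀ g : ℕ, 3 ≤ 2 * g + n →
        (Nat.factorial (3 * g + n - 3) : ℝ) / (Nat.factorial g : ℝ)
          ≤ M * (3 * Real.sqrt 3 / 2) ^ (2 * g + n - 2) *
              Real.Gamma (2 * (g : ℝ) - 2 + n) := by
  refine ⟨2 / √3 ^ n, by positivity, fun g hg => ?_⟩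
  obtain ⟨k, hk⟩ : ∃ k, 2 * g + n = k + 3 := ⟨2 * g + n - 3, by omega⟩
  have hsqrt : √3 ^ (k + 1) * 3 = 3 ^ g * √3 ^ n := by
    calc √3 ^ (k + 1) * 3
        _ = √3 ^ (k + 1 + 2) := by rw [pow_add _ (k + 1) 2, Real.sq_sqrt (by norm_num)]
        _ = √3 ^ (2 * g + n) := by rw [hk]
        _ = 3 ^ g * √3 ^ n := by rw [pow_add, pow_mul, Real.sq_sqrt (by norm_num)]
  have hM : 2 / √3 ^ n * (3 * √3 / 2) ^ (k + 1) = 3 ^ (g + k) / 2 ^ k := by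
    rw [div_pow, mul_pow]
    field_simp
    linear_combination (2 ^ (k + 1) * 3 ^ k) * hsqrt
  have hGamma : Real.Gamma (2 * (g : ℝ) - 2 + n) = k ! := by
    have hkR : 2 * (g : ℝ) + n = k + 3 := by exact_mod_cast hk
    rw [show 2 * (g : ℝ) - 2 + n = k + 1 by linarith, Real.Gamma_nat_eq_factorial]
  rw [show 3 * g + n - 3 = g + k by omega, show 2 * g + n - 2 = k + 1 by omega, hM, hGamma,
    div_le_iff₀ (by positivity), div_mul_eq_mul_div, div_mul_eq_mul_div, le_div_iff₀ (by positivity)]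
  exact_mod_cast Nat.add_factorial_mul_two_pow_le g k

/-- Stirling-type inequality `(3g-3+n)!/g! ≤ M (3√3/2)^{2g-2+n} Γ(2g-2+n)`
for fixed `n ≥ 1`. -/
theorem stmt_14 (n : ℕ) (hn : 1 ≤ n) :
    ∃ M : ℝ, 0 < M ∧
      ∀ g : ℕ, 3 ≤ 2 * g + n →
        (Nat.factorial (3 * g + n - 3) : ℝ) / (Nat.factorial g : ℝ)
          ≤ M * (3 * Real.sqrt 3 / 2) ^ (2 * g + n - 2) *
              Real.Gamma (2 * (g : ℝ) - 2 + n) :=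
  stmt_14_general n
end

section
/- For every integer n ≥ 1 and every real b > 3√3/2 there exists a constant M > 0 such that for every integer g ≥ 0 with 2g−2+n ≥ 1: (3g−3+2n)!/(g!·n!) ≤ M · b^{2g−2+n} · Γ(2g−2+n), where Γ denotes the Gamma function. -/
/-!
With `m = g + n` one has `(3g+2n-3)! ≤ (3m)!` and `Γ(2g-2+n) = (2g+n-3)!`, while
`(3m)! / (m! (2m)!) = binom(3m, m) ≤ (27/4)^m`. Replacing `m!` by `g!` and `(2m)!` by
`(2g+n-3)!` costs only a polynomial factor in `m`, which is absorbed by passing from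
`(27/4)^m` to `(b²)^m`, since `27/4 < b²` exactly when `b > 3√3/2`.
-/

open Nat

lemma Nat.factorial_add_le_factorial_mul_pow (a k : ℕ) : (a + k)! ≤ a ! * (a + k) ^ k := by
  rw [← Nat.factorial_mul_ascFactorial]
  exact Nat.mul_le_mul_left _ (Nat.ascFactorial_le_pow_add a k)

lemma four_pow_mul_factorial_three_mul_le (m : ℕ) :
    4 ^ m * (3 * m)! ≤ 27 ^ m * m ! * (2 * m)! := by
  induction m with
  | zero => simp
  | succ k ih =>
    have hlhs : 4 ^ (k + 1) * (3 * (k + 1))!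
        = 4 * ((3 * k + 3) * (3 * k + 2) * (3 * k + 1)) * (4 ^ k * (3 * k)!) := by
      rw [show 3 * (k + 1) = 3 * k + 2 + 1 by ring, Nat.factorial_succ, Nat.factorial_succ,
        Nat.factorial_succ]
      ring
    have hrhs : 27 ^ (k + 1) * (k + 1)! * (2 * (k + 1))!
        = 27 * ((k + 1) * (2 * k + 2) * (2 * k + 1)) * (27 ^ k * k ! * (2 * k)!) := by
      rw [show 2 * (k + 1) = 2 * k + 1 + 1 by ring, Nat.factorial_succ, Nat.factorial_succ,
        Nat.factorial_succ]
      ring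
    rw [hlhs, hrhs]
    exact Nat.mul_le_mul (by nlinarith) ih

lemma factorial_le_of_three_le_two_mul_add {g n : ℕ} (h : 3 ≤ 2 * g + n) :
    ((3 * g + 2 * n - 3)! : ℝ)
      ≤ ((g + n : ℕ) : ℝ) ^ (2 * n + 3) * (27 / 4 : ℝ) ^ (g + n)
        * (2 ^ (n + 3) * g ! * (2 * g + n - 3)!) := by
  set m := g + n
  have hmono : (3 * g + 2 * n - 3)! ≤ (3 * m)! := Nat.factorial_le (by omega)
  have hm : m ! ≤ g ! * m ^ n := Nat.factorial_add_le_factorial_mul_pow g n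
  have h2m : (2 * m)! ≤ (2 * g + n - 3)! * (2 * m) ^ (n + 3) := by
    have := Nat.factorial_add_le_factorial_mul_pow (2 * g + n - 3) (n + 3)
    rwa [show 2 * g + n - 3 + (n + 3) = 2 * m by omega] at this
  have hnat : 4 ^ m * (3 * g + 2 * n - 3)!
      ≤ 27 ^ m * (g ! * m ^ n) * ((2 * g + n - 3)! * (2 * m) ^ (n + 3)) :=
    calc 4 ^ m * (3 * g + 2 * n - 3)!
        ≤ 4 ^ m * (3 * m)! := Nat.mul_le_mul_left _ hmono
      _ ≤ 27 ^ m * m ! * (2 * m)! := four_pow_mul_factorial_three_mul_le m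
      _ ≤ _ := Nat.mul_le_mul (Nat.mul_le_mul_left _ hm) h2m
  have hreal : (4 : ℝ) ^ m * (3 * g + 2 * n - 3)!
      ≤ 27 ^ m * (g ! * (m : ℝ) ^ n) * ((2 * g + n - 3)! * (2 * (m : ℝ)) ^ (n + 3)) := by
    exact_mod_cast hnat
  have hsplit : (27 : ℝ) ^ m * (g ! * (m : ℝ) ^ n) * ((2 * g + n - 3)! * (2 * (m : ℝ)) ^ (n + 3))
      = 4 ^ m * ((m : ℝ) ^ (2 * n + 3) * (27 / 4) ^ m * (2 ^ (n + 3) * g ! * (2 * g + n - 3)!)) := by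
    rw [div_pow, mul_pow, show 2 * n + 3 = n + (n + 3) by ring, pow_add _ n (n + 3)]
    field_simp
  rw [hsplit] at hreal
  exact le_of_mul_le_mul_left hreal (by positivity)

lemma exists_pow_mul_pow_le_mul_pow {a c : ℝ} (k : ℕ) (ha : 0 ≤ a) (hac : a < c) :
    ∃ C : ℝ, 0 < C ∧ ∀ m : ℕ, (m : ℝ) ^ k * a ^ m ≤ C * c ^ m := by
  have hc : 0 < c := ha.trans_lt hac
  have hr : |a / c| < 1 := by
    rwa [abs_of_nonneg (by positivity), div_lt_one hc]
  obtain ⟨C, hC⟩ := (tendsto_pow_const_mul_const_pow_of_abs_lt_one k hr).bddAbove_range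
  refine ⟨max C 1, by positivity, fun m => ?_⟩
  have hm : (m : ℝ) ^ k * (a / c) ^ m ≤ max C 1 := (hC ⟨m, rfl⟩).trans (le_max_left _ _)
  rwa [div_pow, ← mul_div_assoc, div_le_iff₀ (by positivity)] at hm

theorem stmt_15_general (n : ℕ) (b : ℝ) (hb : 3 * Real.sqrt 3 / 2 < b) :
    ∃ M : ℝ, 0 < M ∧
      ∀ g : ℕ, 3 ≤ 2 * g + n →
        (Nat.factorial (3 * g + 2 * n - 3) : ℝ) /
            ((Nat.factorial g : ℝ) * (Nat.factorial n : ℝ))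
          ≤ M * b ^ (2 * g + n - 2) * Real.Gamma (2 * (g : ℝ) - 2 + n) := by
  have hb0 : 0 < b := lt_trans (by positivity) hb
  have hb2 : (27 / 4 : ℝ) < b ^ 2 := by
    nlinarith [Real.sq_sqrt (show (0 : ℝ) ≤ 3 by norm_num), Real.sqrt_nonneg 3]
  obtain ⟨C, hC, hbound⟩ := exists_pow_mul_pow_le_mul_pow (2 * n + 3) (by norm_num) hb2
  refine ⟨C * 2 ^ (n + 3) * b ^ (n + 2) / n !, by positivity, fun g hg => ?_⟩
  have hΓ : Real.Gamma (2 * (g : ℝ) - 2 + n) = (2 * g + n - 3)! := by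
    rw [← Real.Gamma_nat_eq_factorial, Nat.cast_sub hg]
    push_cast
    ring_nf
  have hpow : (b ^ 2) ^ (g + n) = b ^ (2 * g + n - 2) * b ^ (n + 2) := by
    rw [← pow_mul, ← pow_add]
    congr 1
    omega
  rw [hΓ, div_le_iff₀ (by positivity)]
  calc ((3 * g + 2 * n - 3)! : ℝ)
      ≤ ((g + n : ℕ) : ℝ) ^ (2 * n + 3) * (27 / 4 : ℝ) ^ (g + n)
        * (2 ^ (n + 3) * g ! * (2 * g + n - 3)!) := factorial_le_of_three_le_two_mul_add hg
    _ ≤ C * (b ^ 2) ^ (g + n) * (2 ^ (n + 3) * g ! * (2 * g + n - 3)!) :=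
        mul_le_mul_of_nonneg_right (hbound _) (by positivity)
    _ = _ := by
        rw [hpow]
        field_simp

/-- Stirling-type inequality `(3g-3+2n)!/(g! n!) ≤ M b^{2g-2+n} Γ(2g-2+n)`
for fixed `n ≥ 1` and any base `b > 3√3/2`. -/
theorem stmt_15 (n : ℕ) (hn : 1 ≤ n) (b : ℝ) (hb : 3 * Real.sqrt 3 / 2 < b) :
    ∃ M : ℝ, 0 < M ∧
      ∀ g : ℕ, 3 ≤ 2 * g + n →
        (Nat.factorial (3 * g + 2 * n - 3) : ℝ) /
            ((Nat.factorial g : ℝ) * (Nat.factorial n : ℝ))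
          ≤ M * b ^ (2 * g + n - 2) * Real.Gamma (2 * (g : ℝ) - 2 + n) :=
  stmt_15_general n b hb
end

section
/- For all integers i, j ≥ 0: Σ_{ℓ=0}^{j} 1/C(i+j+1, ℓ) ≤ 11/5, where C(m, ℓ) denotes the binomial coefficient m choose ℓ. -/
/-! The `ℓ = 0` term is `1`, and since `n ≤ C(n, ℓ)` for `0 < ℓ < n`, each of the remaining `j`
terms is at most `1 / (i + j + 1)`; so the sum is in fact below `2`. -/

open Finset

theorem Nat.self_le_choose {n k : ℕ} (hk₀ : 0 < k) (hkn : k < n) : n ≤ n.choose k := by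
  induction n generalizing k with
  | zero => omega
  | succ n ih =>
    obtain ⟨k, rfl⟩ : ∃ k', k = k' + 1 := ⟨k - 1, by omega⟩
    rw [Nat.choose_succ_succ']
    rcases Nat.eq_zero_or_pos k with rfl | hk
    · simp [Nat.add_comm]
    · have := ih hk (by omega)
      have := Nat.choose_pos (n := n) (k := k + 1) (by omega)
      omega

theorem sum_range_inv_choose_le {n j : ℕ} (hjn : j < n) :
    ∑ ℓ ∈ range (j + 1), (n.choose ℓ : ℝ)⁻¹ ≤ 1 + j / n := by
  calc ∑ ℓ ∈ range (j + 1), (n.choose ℓ : ℝ)⁻¹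
      = ∑ ℓ ∈ range j, (n.choose (ℓ + 1) : ℝ)⁻¹ + 1 := by
        simp only [sum_range_succ', Nat.choose_zero_right, Nat.cast_one, inv_one]
    _ ≤ ∑ _ℓ ∈ range j, (n : ℝ)⁻¹ + 1 := by
        gcongr with ℓ hℓ
        · exact_mod_cast Nat.zero_lt_of_lt hjn
        · exact Nat.self_le_choose ℓ.succ_pos (by have := mem_range.mp hℓ; omega)
    _ = 1 + j / n := by simp [div_eq_mul_inv, add_comm]

/-- `Σ_{ℓ=0}^{j} 1/C(i+j+1, ℓ) ≤ 11/5`. -/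
theorem stmt_16 (i j : ℕ) :
    ∑ ℓ ∈ Finset.range (j + 1), ((Nat.choose (i + j + 1) ℓ : ℝ))⁻¹ ≤ 11/5 := by
  have hfrac : (j : ℝ) / (i + j + 1 : ℕ) ≤ 1 :=
    div_le_one_of_le₀ (by exact_mod_cast (by omega : j ≤ i + j + 1)) (by positivity)
  calc ∑ ℓ ∈ Finset.range (j + 1), ((Nat.choose (i + j + 1) ℓ : ℝ))⁻¹
      ≤ 1 + j / (i + j + 1 : ℕ) := sum_range_inv_choose_le (by omega)
    _ ≤ 11 / 5 := by linarith
end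

section
/- For all integers i, j ≥ 0: (i+j+1)!/((2i−1)!!·(2j−1)!!) ≤ 2π·(i+j+1)·√((i+1/2)·(j+1/2)), and consequently (i+j+1)!/((2i−1)!!·(2j−1)!!) ≤ π·(i+j+1)². -/
open Real

lemma choose_le_two_pow' (n k : ℕ) : n.choose k ≤ 2 ^ n := by
  rcases le_or_gt k n with h | h
  · calc n.choose k ≤ ∑ m ∈ Finset.range (n + 1), n.choose m :=
        Finset.single_le_sum (fun _ _ => Nat.zero_le _)
          (Finset.mem_range.mpr (Nat.lt_succ_of_le h))
    _ = 2 ^ n := Nat.sum_range_choose n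
  · simp [Nat.choose_eq_zero_of_lt h]

lemma dfac_sq_le (n : ℕ) :
    ((2 * n).doubleFactorial) ^ 2 ≤ (4 * n + 1) * ((2 * n - 1).doubleFactorial) ^ 2 := by
  induction n with
  | zero => decide
  | succ n ih =>
    have h1 : 2 * (n + 1) = 2 * n + 2 := by ring
    have h2 : 2 * (n + 1) - 1 = 2 * n + 1 := by omega
    rw [h2, h1, Nat.doubleFactorial_add_two,
      show (2 * n + 1) = 2 * n + 1 from rfl, Nat.doubleFactorial_add_one]
    nlinarith [ih, Nat.doubleFactorial_pos (2 * n - 1), Nat.doubleFactorial_pos (2 * n)]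

lemma fact_sq_le (i j : ℕ) :
    ((i + j + 1).factorial) ^ 2 ≤
      (i + j + 1) ^ 2 * ((4 * i + 1) * (4 * j + 1)) *
        (((2 * i - 1).doubleFactorial) ^ 2 * ((2 * j - 1).doubleFactorial) ^ 2) := by
  have hfac : (i + j).factorial ≤ 2 ^ (i + j) * (i.factorial * j.factorial) := by
    have := Nat.add_choose_mul_factorial_mul_factorial i j
    calc (i + j).factorial = (i + j).choose j * i.factorial * j.factorial := this.symm
    _ ≤ 2 ^ (i + j) * i.factorial * j.factorial := by
        exact Nat.mul_le_mul_right _ (Nat.mul_le_mul_right _ (choose_le_two_pow' _ _))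
    _ = 2 ^ (i + j) * (i.factorial * j.factorial) := by ring
  have hdi := dfac_sq_le i
  have hdj := dfac_sq_le j
  have h2i : 2 ^ i * i.factorial = (2 * i).doubleFactorial :=
    (Nat.doubleFactorial_two_mul i).symm
  have h2j : 2 ^ j * j.factorial = (2 * j).doubleFactorial := by
    rw [Nat.doubleFactorial_two_mul]
  calc ((i + j + 1).factorial) ^ 2 = (i + j + 1) ^ 2 * ((i + j).factorial) ^ 2 := by
        rw [Nat.factorial_succ]; ring
  _ ≤ (i + j + 1) ^ 2 * (2 ^ (i + j) * (i.factorial * j.factorial)) ^ 2 :=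
      Nat.mul_le_mul_left _ (Nat.pow_le_pow_left hfac 2)
  _ = (i + j + 1) ^ 2 * ((2 ^ i * i.factorial) ^ 2 * (2 ^ j * j.factorial) ^ 2) := by
      rw [pow_add]; ring
  _ = (i + j + 1) ^ 2 * (((2 * i).doubleFactorial) ^ 2 * ((2 * j).doubleFactorial) ^ 2) := by
      rw [h2i, h2j]
  _ ≤ (i + j + 1) ^ 2 * (((4 * i + 1) * ((2 * i - 1).doubleFactorial) ^ 2) *
        ((4 * j + 1) * ((2 * j - 1).doubleFactorial) ^ 2)) :=
      Nat.mul_le_mul_left _ (Nat.mul_le_mul hdi hdj)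
  _ = (i + j + 1) ^ 2 * ((4 * i + 1) * (4 * j + 1)) *
        (((2 * i - 1).doubleFactorial) ^ 2 * ((2 * j - 1).doubleFactorial) ^ 2) := by ring

/-- `(i+j+1)!/((2i-1)!!(2j-1)!!) ≤ 2π(i+j+1)√((i+1/2)(j+1/2))`, and
consequently it is at most `π(i+j+1)²`. -/
theorem stmt_18 (i j : ℕ) :
    (Nat.factorial (i + j + 1) : ℝ) /
        ((Nat.doubleFactorial (2 * i - 1) : ℝ) * (Nat.doubleFactorial (2 * j - 1) : ℝ))
      ≤ 2 * π * ((i : ℝ) + j + 1) * Real.sqrt (((i : ℝ) + 1/2) * ((j : ℝ) + 1/2)) ∧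
    (Nat.factorial (i + j + 1) : ℝ) /
        ((Nat.doubleFactorial (2 * i - 1) : ℝ) * (Nat.doubleFactorial (2 * j - 1) : ℝ))
      ≤ π * ((i : ℝ) + j + 1) ^ 2 := by
  set A : ℝ := (Nat.doubleFactorial (2 * i - 1) : ℝ) * (Nat.doubleFactorial (2 * j - 1) : ℝ)
    with hA
  have hApos : 0 < A := by
    apply mul_pos <;> exact_mod_cast Nat.doubleFactorial_pos _
  set F : ℝ := (Nat.factorial (i + j + 1) : ℝ) with hF
  have hFpos : 0 < F := by rw [hF]; exact_mod_cast Nat.factorial_pos (i + j + 1)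
  have hn1 : (0:ℝ) < (i : ℝ) + j + 1 := by positivity
  -- squared inequality from the Nat lemma
  have hsq : F ^ 2 ≤ ((i:ℝ) + j + 1) ^ 2 * ((4 * i + 1) * (4 * j + 1)) * A ^ 2 := by
    have := fact_sq_le i j
    have hcast : ((((i + j + 1) ^ 2 * ((4 * i + 1) * (4 * j + 1)) *
        (((2 * i - 1).doubleFactorial) ^ 2 * ((2 * j - 1).doubleFactorial) ^ 2) : ℕ)) : ℝ)
        = ((i:ℝ) + j + 1) ^ 2 * ((4 * i + 1) * (4 * j + 1)) * A ^ 2 := by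
      push_cast [hA]; ring
    calc F ^ 2 = (((i + j + 1).factorial ^ 2 : ℕ) : ℝ) := by push_cast [hF]; ring
    _ ≤ _ := by rw [← hcast]; exact_mod_cast this
  have hPpos : (0:ℝ) ≤ ((i:ℝ) + 1/2) * ((j:ℝ) + 1/2) := by positivity
  have hpi := Real.pi_gt_three
  -- key: F / A ≤ (i+j+1) * sqrt((4i+1)(4j+1))
  have hmain : F / A ≤ 2 * π * ((i : ℝ) + j + 1) *
      Real.sqrt (((i : ℝ) + 1/2) * ((j : ℝ) + 1/2)) := by
    rw [div_le_iff₀ hApos]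
    have hsqrt : Real.sqrt (((4*(i:ℝ) + 1) * (4*(j:ℝ) + 1)))
        ≤ 2 * π * Real.sqrt (((i : ℝ) + 1/2) * ((j : ℝ) + 1/2)) := by
      rw [show (2 * π * Real.sqrt (((i : ℝ) + 1/2) * ((j : ℝ) + 1/2)))
          = Real.sqrt ((2*π)^2 * (((i : ℝ) + 1/2) * ((j : ℝ) + 1/2))) by
        rw [Real.sqrt_mul (by positivity : (0:ℝ) ≤ (2*π)^2),
          Real.sqrt_sq (by positivity : (0:ℝ) ≤ 2*π)]]
      apply Real.sqrt_le_sqrt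
      have hpi2 : (9:ℝ) ≤ π ^ 2 := by nlinarith
      have hij : (0:ℝ) ≤ (2*(i:ℝ)+1) * (2*(j:ℝ)+1) := by positivity
      nlinarith [hpi2, hij, Nat.cast_nonneg (α := ℝ) i, Nat.cast_nonneg (α := ℝ) j]
    have hFle : F ≤ ((i:ℝ) + j + 1) * Real.sqrt ((4*(i:ℝ) + 1) * (4*(j:ℝ) + 1)) * A := by
      have h1 : F ≤ Real.sqrt (((i:ℝ) + j + 1) ^ 2 * ((4 * i + 1) * (4 * j + 1)) * A ^ 2) := by
        rw [show F = Real.sqrt (F ^ 2) from (Real.sqrt_sq hFpos.le).symm]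
        exact Real.sqrt_le_sqrt hsq
      calc F ≤ _ := h1
      _ = ((i:ℝ) + j + 1) * Real.sqrt ((4*(i:ℝ) + 1) * (4*(j:ℝ) + 1)) * A := by
          rw [Real.sqrt_mul (by positivity), Real.sqrt_mul (by positivity),
            Real.sqrt_sq hn1.le, Real.sqrt_sq hApos.le]
          try push_cast
          try ring
    calc F ≤ ((i:ℝ) + j + 1) * Real.sqrt ((4*(i:ℝ) + 1) * (4*(j:ℝ) + 1)) * A := hFle
    _ ≤ ((i:ℝ) + j + 1) * (2 * π * Real.sqrt (((i : ℝ) + 1/2) * ((j : ℝ) + 1/2))) * A := by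
        apply mul_le_mul_of_nonneg_right _ hApos.le
        exact mul_le_mul_of_nonneg_left hsqrt hn1.le
    _ = 2 * π * ((i : ℝ) + j + 1) * Real.sqrt (((i : ℝ) + 1/2) * ((j : ℝ) + 1/2)) * A := by
        ring
  refine ⟨hmain, hmain.trans ?_⟩
  have hAM : Real.sqrt (((i : ℝ) + 1/2) * ((j : ℝ) + 1/2)) ≤ ((i:ℝ) + j + 1) / 2 := by
    rw [show ((i:ℝ) + j + 1) / 2 = Real.sqrt ((((i:ℝ) + j + 1) / 2) ^ 2) by
      rw [Real.sqrt_sq (by positivity)]]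
    apply Real.sqrt_le_sqrt
    nlinarith [sq_nonneg ((i:ℝ) - j)]
  calc 2 * π * ((i : ℝ) + j + 1) * Real.sqrt (((i : ℝ) + 1/2) * ((j : ℝ) + 1/2))
      ≤ 2 * π * ((i : ℝ) + j + 1) * (((i:ℝ) + j + 1) / 2) := by
        apply mul_le_mul_of_nonneg_left hAM; positivity
  _ = π * ((i : ℝ) + j + 1) ^ 2 := by ring
end
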